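/- arXiv:1008.1715 — 12 statements merged into one kernel-verified Lean document; each statement's English description precedes it below -/
import Mathlib

section
/- Let Σ be a type of characters and V a type of hash values, and let h be a function from finite strings over Σ (lists of elements of Σ, including the empty string) to V. Then h is an iterated hash function — i.e., there exist a compression function F : V → Σ → V and an initial value H₀ ∈ V such that h(s) = List.foldl F H₀ s for every string s — if and only if for all strings s, s' with h(s) = h(s'), one has h(s ++ s'') = h(s' ++ s'') for every string s''. -/
/-!
A fold satisfies `foldl F H₀ (s ++ s'') = foldl F (foldl F H₀ s) s''`, so collisions of an
iterated hash propagate. Conversely, if collisions survive appending one character, then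
`h (s ++ [a])` depends only on `h s` and `a`; choosing for each hash value `v` in the range of
`h` a preimage `invFun h v` gives the compression function `F v a = h (invFun h v ++ [a])`,
with initial value `h []`.
-/

section

variable {A V : Type*}

theorem collision_extends_of_eq_foldl {h : List A → V} {F : V → A → V} {H0 : V}
    (hF : ∀ s, h s = s.foldl F H0) {s s' : List A} (hs : h s = h s') (s'' : List A) :
    h (s ++ s'') = h (s' ++ s'') := by
  rw [hF, hF, List.foldl_append, List.foldl_append, ← hF, ← hF, hs]

theorem eq_foldl_invFun_of_collision_extends_singleton {h : List A → V}
    (H : ∀ s s', h s = h s' → ∀ a, h (s ++ [a]) = h (s' ++ [a])) (s : List A) :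
    h s = s.foldl (fun v a => h (Function.invFun h v ++ [a])) (h []) := by
  induction s using List.reverseRecOn with
  | nil => rfl
  | append_singleton s a ih =>
    rw [List.foldl_append, ← ih, List.foldl_cons, List.foldl_nil]
    exact H _ _ (Function.invFun_eq ⟨s, rfl⟩).symm a

end

/-- a hash function `h` on variable-length strings is an iterated hash
function (i.e. computed by folding a compression function `F` from an initial value `H₀`)
iff whenever two strings collide, all their common extensions collide. -/
theorem iterated_iff_collision_extends {A V : Type*} (h : List A → V) :
    (∃ (F : V → A → V) (H0 : V), ∀ s : List A, h s = List.foldl F H0 s) ↔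
      (∀ s s' : List A, h s = h s' → ∀ s'' : List A, h (s ++ s'') = h (s' ++ s'')) := by
  constructor
  · rintro ⟨F, H0, hF⟩ s s' hs
    exact collision_extends_of_eq_foldl hF hs
  · intro H
    exact ⟨_, _, eq_foldl_invFun_of_collision_extends_singleton fun s s' hs a ↦ H s s' hs [a]⟩
end

section
/- Let L ≥ 1, let Σ be a nonempty alphabet, and let μ be any probability distribution with finite support on functions from strings over Σ to Fin (2^L) such that every function in the support of μ is an iterated hash function. Then μ is not 3-wise independent over the strings of length at most 3: there exist three pairwise distinct strings s, s', s'' of length at most 3 and hash values y, y', y'' in Fin (2^L) such that the probability (under h drawn from μ) that h(s) = y and h(s') = y' and h(s'') = y'' is not equal to 1/2^(3L). -/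
open scoped ENNReal

/-! An iterated hash cannot leave a fixed point of its compression function: if `h [] = h [a]`,
i.e. `F H₀ a = H₀`, then also `h [a, a] = H₀`. So the event `h [] = y ∧ h [a] = y ∧ h [a, a] = y''`
with `y ≠ y''` is empty on the support of `μ`, and has probability `0 ≠ 1 / 2 ^ (3 L)`. -/

theorem List.foldl_replicate_of_apply_eq {α β : Type*} {f : β → α → β} {b : β} {a : α}
    (h : f b a = b) (n : ℕ) : (List.replicate n a).foldl f b = b := by
  induction n with
  | zero => rfl
  | succ n ih => rw [List.replicate_succ, List.foldl_cons, h, ih]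

theorem PMF.tsum_ite_eq_zero_of_forall_mem_support_not {α : Type*} (μ : PMF α) (P : α → Prop)
    [DecidablePred P] (h : ∀ x ∈ μ.support, ¬ P x) : (∑' x, if P x then μ x else 0) = 0 := by
  have hzero : μ.toOuterMeasure {x | P x} = 0 :=
    (μ.toOuterMeasure_apply_eq_zero_iff _).2 (Set.disjoint_left.2 h)
  simpa only [PMF.toOuterMeasure_apply, Set.indicator_apply, Set.mem_ofPred_eq] using hzero

theorem foldl_pair_eq_of_foldl_singleton_eq {α β : Type*} {F : β → α → β} {H₀ : β} {a : α}
    (h : [a].foldl F H₀ = [].foldl F H₀) : [a, a].foldl F H₀ = H₀ :=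
  List.foldl_replicate_of_apply_eq h 2

theorem iterated_not_threewise_independent_general
    {A : Type*} [Nonempty A] (L : ℕ) (hL : 1 ≤ L)
    (μ : PMF (List A → Fin (2 ^ L)))
    (hiter : ∀ h ∈ μ.support, ∃ (F : Fin (2 ^ L) → A → Fin (2 ^ L)) (H0 : Fin (2 ^ L)),
      ∀ s : List A, h s = List.foldl F H0 s) :
    ∃ s s' s'' : List A, s.length ≤ 3 ∧ s'.length ≤ 3 ∧ s''.length ≤ 3 ∧
      s ≠ s' ∧ s ≠ s'' ∧ s' ≠ s'' ∧
      ∃ y y' y'' : Fin (2 ^ L),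
        (∑' h : List A → Fin (2 ^ L),
            if h s = y ∧ h s' = y' ∧ h s'' = y'' then μ h else 0) ≠ 1 / 2 ^ (3 * L) := by
  obtain ⟨a⟩ := ‹Nonempty A›
  have : Nontrivial (Fin (2 ^ L)) :=
    Fin.nontrivial_iff_two_le.2 (by simpa using Nat.pow_le_pow_right two_pos hL)
  obtain ⟨y, y'', hne⟩ := exists_pair_ne (Fin (2 ^ L))
  refine ⟨[], [a], [a, a], by simp, by simp, by simp, by simp, by simp, by simp, y, y, y'', ?_⟩
  have hnull : ∀ h ∈ μ.support, ¬ (h [] = y ∧ h [a] = y ∧ h [a, a] = y'') := by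
    rintro h hh ⟨hnil, hsingle, hpair⟩
    obtain ⟨F, H0, hF⟩ := hiter h hh
    rw [hF] at hnil hsingle hpair
    rw [foldl_pair_eq_of_foldl_singleton_eq (hsingle.trans hnil.symm)] at hpair
    exact hne (hnil.symm.trans hpair)
  rw [μ.tsum_ite_eq_zero_of_forall_mem_support_not _ hnull]
  exact (ENNReal.div_pos one_ne_zero (ENNReal.pow_ne_top ENNReal.ofNat_ne_top)).ne

/-- a finitely supported distribution on iterated hash functions into
`Fin (2^L)` (`L ≥ 1`) is never 3-wise independent over the strings of length at most 3. -/
theorem iterated_not_threewise_independent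
    {A : Type*} [Nonempty A] (L : ℕ) (hL : 1 ≤ L)
    (μ : PMF (List A → Fin (2 ^ L))) (hfin : μ.support.Finite)
    (hiter : ∀ h ∈ μ.support, ∃ (F : Fin (2 ^ L) → A → Fin (2 ^ L)) (H0 : Fin (2 ^ L)),
      ∀ s : List A, h s = List.foldl F H0 s) :
    ∃ s s' s'' : List A, s.length ≤ 3 ∧ s'.length ≤ 3 ∧ s''.length ≤ 3 ∧
      s ≠ s' ∧ s ≠ s'' ∧ s' ≠ s'' ∧
      ∃ y y' y'' : Fin (2 ^ L),
        (∑' h : List A → Fin (2 ^ L),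
            if h s = y ∧ h s' = y' ∧ h s'' = y'' then μ h else 0) ≠ 1 / 2 ^ (3 * L) :=
  iterated_not_threewise_independent_general L hL μ hiter
end

section
/- Let F be a finite field and n ≥ 1. For m = (m₁, m₂, …, m_{n+1}) ∈ F^{n+1}, define the multilinear hash of a string s = s₁s₂⋯s_k over F (with k ≤ n) by h_m(s) = m₁ + Σ_{i=1}^{k} m_{i+1}·sᵢ. Then for any two distinct nonempty strings s, s' over F of lengths at most n whose last characters are nonzero, and for any y, y' ∈ F, the number of tuples m ∈ F^{n+1} with h_m(s) = y and h_m(s') = y' equals |F|^{n−1}. Equivalently, when m is chosen uniformly at random from F^{n+1}, P(h_m(s)=y ∧ h_m(s')=y') = 1/|F|², so the multilinear family is pairwise independent over strings of length at most n not ending with the value zero. -/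
/-- The multilinear hash `h_m(s) = m₁ + Σ_{i=1}^{k} m_{i+1}·sᵢ` of a string `s` of length
`k ≤ n` over a field, with parameter tuple `m ∈ F^{n+1}`. -/
def multilinearHash {F : Type*} [CommRing F] {n : ℕ} (m : Fin (n + 1) → F)
    (s : List F) (hs : s.length ≤ n) : F :=
  m 0 + ∑ i : Fin s.length, m ((i.succ).castLE (Nat.succ_le_succ hs)) * s.get i

/-! Both hashes are linear in `m`: `h_m(s) = c_s ⬝ᵥ m` with `c_s = (1, s₁, …, s_k, 0, …, 0)`.
Since the strings do not end in `0`, distinct strings have distinct coefficient vectors, and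
two distinct vectors with the same first coordinate `1` are linearly independent. Hence
`m ↦ (h_m(s), h_m(s'))` is a surjective additive map `F^{n+1} → F²`, whose fibres are cosets
of its kernel and so all have `|F|^{n+1} / |F|²` elements. -/

open Finset Matrix

theorem AddMonoidHom.card_fiber_mul_card_of_surjective {G M : Type*} [AddGroup G] [Fintype G]
    [AddMonoid M] [Fintype M] [DecidableEq M] (f : G →+ M) (hf : Function.Surjective f)
    (y : M) : #{g | f g = y} * Fintype.card M = Fintype.card G := by
  have hfiber (z : M) : #{g | f g = z} = #{g | f g = y} :=
    AddMonoidHom.card_fiber_eq_of_mem_range f (hf z) (hf y)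
  calc #{g | f g = y} * Fintype.card M
      = ∑ z : M, #{g | f g = z} := by
        simp only [hfiber, sum_const, card_univ, smul_eq_mul, mul_comm]
    _ = Fintype.card G := (card_eq_sum_card_fiberwise fun _ _ => mem_univ _).symm

theorem dotProduct_prod_surjective {ι F : Type*} [Fintype ι] [DecidableEq ι] [Field F]
    {a a' : ι → F} {i₀ : ι} (h : a i₀ = 1) (h' : a' i₀ = 1) (hne : a ≠ a') :
    Function.Surjective fun m => (a ⬝ᵥ m, a' ⬝ᵥ m) := by
  obtain ⟨j, hj⟩ := Function.ne_iff.mp hne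
  have hd : a j - a' j ≠ 0 := sub_ne_zero.mpr hj
  have hji₀ : j ≠ i₀ := by rintro rfl; exact hj (h.trans h'.symm)
  rintro ⟨y, y'⟩
  set c := (y - y') / (a j - a' j)
  have hc : c * (a j - a' j) = y - y' := div_mul_cancel₀ _ hd
  refine ⟨Pi.single i₀ (y - a j * c) + Pi.single j c, ?_⟩
  simp only [dotProduct_add, dotProduct_single, h, h', Prod.mk.injEq]
  constructor
  · ring
  · linear_combination -hc

theorem List.length_le_of_getD_eq {α : Type*} {l l' : List α} {d : α} (hl' : l' ≠ [])
    (hlast : l'.getLast hl' ≠ d) (h : ∀ i, l.getD i d = l'.getD i d) :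
    l'.length ≤ l.length := by
  have hpos : 0 < l'.length := List.length_pos_iff.mpr hl'
  by_contra! hlt
  apply hlast
  rw [List.getLast_eq_getElem, ← List.getD_eq_getElem _ d, ← h,
    List.getD_eq_default _ _ (by omega)]

theorem List.eq_of_getD_eq {α : Type*} {l l' : List α} {d : α} (hl : l ≠ []) (hl' : l' ≠ [])
    (hlast : l.getLast hl ≠ d) (hlast' : l'.getLast hl' ≠ d)
    (h : ∀ i, l.getD i d = l'.getD i d) : l = l' := by
  have hlen : l.length = l'.length :=
    le_antisymm (length_le_of_getD_eq hl hlast fun i => (h i).symm)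
      (length_le_of_getD_eq hl' hlast' h)
  refine List.ext_getElem hlen fun i hi hi' => ?_
  rw [← List.getD_eq_getElem _ d hi, ← List.getD_eq_getElem _ d hi', h]

def hashCoeffs {R : Type*} [CommRing R] (n : ℕ) (s : List R) : Fin (n + 1) → R :=
  Fin.cons 1 fun i => s.getD i 0

theorem multilinearHash_eq_dotProduct {R : Type*} [CommRing R] {n : ℕ} (m : Fin (n + 1) → R)
    (s : List R) (hs : s.length ≤ n) : multilinearHash m s hs = hashCoeffs n s ⬝ᵥ m := by
  obtain ⟨k, rfl⟩ := Nat.exists_eq_add_of_le hs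
  rw [dotProduct, Fin.sum_univ_succ, Fin.sum_univ_add]
  simp only [hashCoeffs, Fin.cons_zero, Fin.cons_succ, one_mul, multilinearHash]
  have htail : ∑ i : Fin k, s.getD (Fin.natAdd s.length i) 0 * m (Fin.natAdd s.length i).succ
      = 0 :=
    sum_eq_zero fun i _ => by rw [List.getD_eq_default _ _ (by simp), zero_mul]
  rw [htail, add_zero]
  refine congrArg _ (sum_congr rfl fun i _ => ?_)
  rw [mul_comm, Fin.val_castAdd, List.getD_eq_getElem _ _ i.isLt]
  rfl

theorem getD_eq_of_hashCoeffs_eq {R : Type*} [CommRing R] {n : ℕ} {s s' : List R}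
    (hs : s.length ≤ n) (hs' : s'.length ≤ n) (h : hashCoeffs n s = hashCoeffs n s') (i : ℕ) :
    s.getD i 0 = s'.getD i 0 := by
  rcases lt_or_ge i n with hi | hi
  · exact congrFun (Fin.cons_right_injective _ h) ⟨i, hi⟩
  · rw [List.getD_eq_default _ _ (hs.trans hi), List.getD_eq_default _ _ (hs'.trans hi)]

theorem multilinear_pairwise_independent_general
    {F : Type*} [Field F] [Fintype F] [DecidableEq F] {n : ℕ}
    (s s' : List F) (hs : s.length ≤ n) (hs' : s'.length ≤ n)
    (hne : s ≠ s') (hsnil : s ≠ []) (hs'nil : s' ≠ [])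
    (hlast : s.getLast hsnil ≠ 0) (hlast' : s'.getLast hs'nil ≠ 0)
    (y y' : F) :
    (Finset.univ.filter fun m : Fin (n + 1) → F =>
        multilinearHash m s hs = y ∧ multilinearHash m s' hs' = y').card
      = Fintype.card F ^ (n - 1) ∧
    ((Finset.univ.filter fun m : Fin (n + 1) → F =>
        multilinearHash m s hs = y ∧ multilinearHash m s' hs' = y').card : ℚ)
        / Fintype.card (Fin (n + 1) → F) = 1 / (Fintype.card F : ℚ) ^ 2 := by
  have hcoeffs : hashCoeffs n s ≠ hashCoeffs n s' := fun h =>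
    hne (List.eq_of_getD_eq hsnil hs'nil hlast hlast' (getD_eq_of_hashCoeffs_eq hs hs' h))
  let f := ((dotProductBilin F F (hashCoeffs n s)).prod
    (dotProductBilin F F (hashCoeffs n s'))).toAddMonoidHom
  have hcount := f.card_fiber_mul_card_of_surjective
    (dotProduct_prod_surjective (i₀ := 0) rfl rfl hcoeffs) (y, y')
  have hfiber : #{m | f m = (y, y')} =
      #{m : Fin (n + 1) → F | multilinearHash m s hs = y ∧ multilinearHash m s' hs' = y'} := by
    simp only [f, LinearMap.toAddMonoidHom_coe, LinearMap.prod_apply, Function.prod_apply,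
      dotProductBilin_apply_apply, Prod.mk.injEq, multilinearHash_eq_dotProduct]
  rw [hfiber] at hcount
  have hn : 1 ≤ n := (List.length_pos_iff.mpr hsnil).trans_le hs
  rw [Fintype.card_prod, Fintype.card_fun, Fintype.card_fin] at hcount
  have hpow : Fintype.card F ^ (n + 1)
      = Fintype.card F ^ (n - 1) * (Fintype.card F * Fintype.card F) := by
    rw [← sq, ← pow_add]
    congr 1
    omega
  have hc := Nat.eq_of_mul_eq_mul_right (by positivity) (hcount.trans hpow)
  refine ⟨hc, ?_⟩
  rw [hc, Fintype.card_fun, Fintype.card_fin, hpow]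
  push_cast
  field_simp

/-- for distinct nonempty strings of length at most `n` over a finite field,
ending in nonzero characters, the number of parameter tuples `m ∈ F^{n+1}` hashing them to
prescribed values `y, y'` is exactly `|F|^{n-1}`; equivalently the multilinear family is
pairwise independent (each pair of values has probability `1/|F|²`). -/
theorem multilinear_pairwise_independent
    {F : Type*} [Field F] [Fintype F] [DecidableEq F] {n : ℕ} (hn : 1 ≤ n)
    (s s' : List F) (hs : s.length ≤ n) (hs' : s'.length ≤ n)
    (hne : s ≠ s') (hsnil : s ≠ []) (hs'nil : s' ≠ [])
    (hlast : s.getLast hsnil ≠ 0) (hlast' : s'.getLast hs'nil ≠ 0)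
    (y y' : F) :
    (Finset.univ.filter fun m : Fin (n + 1) → F =>
        multilinearHash m s hs = y ∧ multilinearHash m s' hs' = y').card
      = Fintype.card F ^ (n - 1) ∧
    ((Finset.univ.filter fun m : Fin (n + 1) → F =>
        multilinearHash m s hs = y ∧ multilinearHash m s' hs' = y').card : ℚ)
        / Fintype.card (Fin (n + 1) → F) = 1 / (Fintype.card F : ℚ) ^ 2 :=
  multilinear_pairwise_independent_general s s' hs hs' hne hsnil hs'nil hlast hlast' y y'
end

section
/- Let L ≥ 1, let Σ be an alphabet with at least two characters, and let μ be any probability distribution with finite support on functions from strings over Σ to Fin (2^L) such that every function in the support of μ is a generalized iterated hash function. Then μ is not 4-wise independent over the strings of length at most 2: there exist four pairwise distinct strings of length at most 2 and hash values y⁽¹⁾, y⁽²⁾, y⁽³⁾, y⁽⁴⁾ such that the probability that the four strings hash to these four values respectively is not equal to 1/2^(4L). -/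
/-!
A generalized iterated hash function only sees a string through its running state, so two
strings of the same length that collide keep colliding after any common suffix: `h [a] = h [b]`
forces `h [a, a] = h [b, a]`. Hence the event `h [a] = h [b] = h [a, a] = y ≠ h [b, a]` has
probability `0`, whereas 4-wise independence would give it probability `2^(-4L) > 0`.
-/

open scoped ENNReal

/-- Fold for generalized iterated hashing: a (possibly different) compression function
`F i` is used for the character processed at step `i`. -/
def genIterFold {V A : Type*} (F : ℕ → V → A → V) : ℕ → V → List A → V
  | _, y, [] => y
  | i, y, c :: s => genIterFold F (i + 1) (F i y c) s

theorem genIterFold_append {V A : Type*} (F : ℕ → V → A → V) (i : ℕ) (y : V) (s t : List A) :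
    genIterFold F i y (s ++ t) = genIterFold F (i + s.length) (genIterFold F i y s) t := by
  induction s generalizing i y with
  | nil => rfl
  | cons c s ih =>
    simp only [List.cons_append, genIterFold, ih, List.length_cons]
    rw [Nat.add_assoc, Nat.add_comm 1]

def IsGenIteratedHash {V A : Type*} (h : List A → V) : Prop :=
  ∃ (F : ℕ → V → A → V) (H0 : V), ∀ s : List A, h s = genIterFold F 1 H0 s

theorem IsGenIteratedHash.apply_append_eq_of_apply_eq {V A : Type*} {h : List A → V}
    (hh : IsGenIteratedHash h) {s t : List A} (hlen : s.length = t.length) (hst : h s = h t)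
    (u : List A) : h (s ++ u) = h (t ++ u) := by
  obtain ⟨F, H0, hF⟩ := hh
  rw [hF, hF] at hst ⊢
  rw [genIterFold_append, genIterFold_append, hst, hlen]

theorem PMF.tsum_ite_eq_zero {α : Type*} (μ : PMF α) (P : α → Prop) [DecidablePred P]
    (hP : ∀ x ∈ μ.support, ¬P x) : (∑' x, if P x then μ x else 0) = 0 :=
  ENNReal.tsum_eq_zero.2 fun x => by
    split_ifs with hx
    · exact (PMF.apply_eq_zero_iff μ x).2 fun hmem => hP x hmem hx
    · rfl

theorem generalized_iterated_not_fourwise_independent_general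
    {A : Type*} [Nontrivial A] (L : ℕ) (hL : 1 ≤ L)
    (μ : PMF (List A → Fin (2 ^ L)))
    (hiter : ∀ h ∈ μ.support,
      ∃ (F : ℕ → Fin (2 ^ L) → A → Fin (2 ^ L)) (H0 : Fin (2 ^ L)),
        ∀ s : List A, h s = genIterFold F 1 H0 s) :
    ∃ s1 s2 s3 s4 : List A,
      s1.length ≤ 2 ∧ s2.length ≤ 2 ∧ s3.length ≤ 2 ∧ s4.length ≤ 2 ∧
      s1 ≠ s2 ∧ s1 ≠ s3 ∧ s1 ≠ s4 ∧ s2 ≠ s3 ∧ s2 ≠ s4 ∧ s3 ≠ s4 ∧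
      ∃ y1 y2 y3 y4 : Fin (2 ^ L),
        (∑' h : List A → Fin (2 ^ L),
            if h s1 = y1 ∧ h s2 = y2 ∧ h s3 = y3 ∧ h s4 = y4 then μ h else 0)
          ≠ 1 / 2 ^ (4 * L) := by
  obtain ⟨a, b, hab⟩ := exists_pair_ne A
  have : Nontrivial (Fin (2 ^ L)) :=
    Fin.nontrivial_iff_two_le.2 (Nat.le_self_pow (Nat.one_le_iff_ne_zero.1 hL) 2)
  obtain ⟨y, y', hyy'⟩ := exists_pair_ne (Fin (2 ^ L))
  refine ⟨[a], [b], [a, a], [b, a], by simp, by simp, by simp, by simp, by simp [hab], by simp,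
    by simp, by simp, by simp, by simp [hab], y, y, y, y', ?_⟩
  rw [PMF.tsum_ite_eq_zero]
  · exact (ENNReal.div_pos one_ne_zero (ENNReal.pow_ne_top ENNReal.ofNat_ne_top)).ne
  rintro h hh ⟨ha, hb, haa, hba⟩
  have hcollide : h [a, a] = h [b, a] :=
    IsGenIteratedHash.apply_append_eq_of_apply_eq (hiter h hh) (s := [a]) (t := [b]) rfl
      (ha.trans hb.symm) [a]
  exact hyy' (haa.symm.trans (hcollide.trans hba))

/-- a finitely supported distribution on generalized iterated hash functions
into `Fin (2^L)` (`L ≥ 1`, alphabet with at least two characters) is never 4-wise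
independent over the strings of length at most 2. -/
theorem generalized_iterated_not_fourwise_independent
    {A : Type*} [Nontrivial A] (L : ℕ) (hL : 1 ≤ L)
    (μ : PMF (List A → Fin (2 ^ L))) (hfin : μ.support.Finite)
    (hiter : ∀ h ∈ μ.support,
      ∃ (F : ℕ → Fin (2 ^ L) → A → Fin (2 ^ L)) (H0 : Fin (2 ^ L)),
        ∀ s : List A, h s = genIterFold F 1 H0 s) :
    ∃ s1 s2 s3 s4 : List A,
      s1.length ≤ 2 ∧ s2.length ≤ 2 ∧ s3.length ≤ 2 ∧ s4.length ≤ 2 ∧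
      s1 ≠ s2 ∧ s1 ≠ s3 ∧ s1 ≠ s4 ∧ s2 ≠ s3 ∧ s2 ≠ s4 ∧ s3 ≠ s4 ∧
      ∃ y1 y2 y3 y4 : Fin (2 ^ L),
        (∑' h : List A → Fin (2 ^ L),
            if h s1 = y1 ∧ h s2 = y2 ∧ h s3 = y3 ∧ h s4 = y4 then μ h else 0)
          ≠ 1 / 2 ^ (4 * L) :=
  generalized_iterated_not_fourwise_independent_general L hL μ hiter
end

section
/- Let Σ be an alphabet, V a finite set of hash values, n ≥ 2, and let μ be a probability distribution with finite support on iterated hash functions from strings over Σ to V. Suppose there is a constant ε such that P(h(s) = h(s')) = ε for every pair of distinct strings s, s' of length at most n. Then every hash function h in the support of μ has a permuting compression in the following sense: for all strings s, s' and every character c ∈ Σ with the extended strings s ++ [c] and s' ++ [c] of length at most n, if h(s) ≠ h(s') then h(s ++ [c]) ≠ h(s' ++ [c]). -/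
open scoped ENNReal

/-!
For an iterated hash function `h = foldl F H₀`, a collision `h s = h s'` propagates to
`h (s ++ [c]) = h (s' ++ [c])`. So, restricted to the support of `μ`, the event "`s` and `s'`
collide" is contained in the event "`s ++ [c]` and `s' ++ [c]` collide". If some `h` in the
support collided on the extensions but not on `s, s'`, the second event would have probability
at least `ε + μ h > ε`, contradicting that both probabilities equal `ε`.
-/

namespace PMF

variable {α : Type*} (p : PMF α)

theorem toOuterMeasure_ne_top (S : Set α) : p.toOuterMeasure S ≠ ∞ := by
  rw [toOuterMeasure_apply]
  exact p.tsum_coe_indicator_ne_top S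

theorem toOuterMeasure_add_apply_le {S T : Set α} {x : α} (hST : S ∩ p.support ⊆ T)
    (hxS : x ∉ S) (hxT : x ∈ T) : p.toOuterMeasure S + p x ≤ p.toOuterMeasure T := by
  classical
  rw [← toOuterMeasure_apply_inter_support, toOuterMeasure_apply, toOuterMeasure_apply,
    ← tsum_ite_eq x p, ← ENNReal.tsum_add]
  refine ENNReal.tsum_le_tsum fun y => ?_
  by_cases hyx : y = x
  · subst hyx
    simp [hxS, hxT]
  · rw [if_neg hyx, add_zero]
    exact Set.indicator_le_indicator_of_subset hST (fun _ => zero_le) y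

theorem toOuterMeasure_lt_of_mem_diff {S T : Set α} {x : α} (hST : S ∩ p.support ⊆ T)
    (hxS : x ∉ S) (hxT : x ∈ T) (hx : x ∈ p.support) :
    p.toOuterMeasure S < p.toOuterMeasure T :=
  calc p.toOuterMeasure S < p.toOuterMeasure S + p x :=
        ENNReal.lt_add_right (p.toOuterMeasure_ne_top S) hx
    _ ≤ p.toOuterMeasure T := p.toOuterMeasure_add_apply_le hST hxS hxT

end PMF

section IteratedHash

variable {A V : Type*}

def IsIteratedHash (h : List A → V) : Prop :=
  ∃ (F : V → A → V) (H0 : V), ∀ s : List A, h s = List.foldl F H0 s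

theorem IsIteratedHash.apply_append_eq {h : List A → V} (hh : IsIteratedHash h)
    {s s' : List A} (hs : h s = h s') (t : List A) : h (s ++ t) = h (s' ++ t) := by
  obtain ⟨F, H0, hF⟩ := hh
  rw [hF, hF, List.foldl_append, List.foldl_append, ← hF, ← hF, hs]

def collisionSet (s s' : List A) : Set (List A → V) := {h | h s = h s'}

theorem PMF.toOuterMeasure_collisionSet [DecidableEq V] (μ : PMF (List A → V))
    (s s' : List A) :
    μ.toOuterMeasure (collisionSet s s') = ∑' h : List A → V, if h s = h s' then μ h else 0 := by
  simp only [PMF.toOuterMeasure_apply, Set.indicator_apply, collisionSet, Set.mem_ofPred_eq]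

end IteratedHash

theorem fixed_collision_prob_implies_permuting_general
    {A V : Type*} [DecidableEq V] (n : ℕ)
    (μ : PMF (List A → V))
    (hiter : ∀ h ∈ μ.support, ∃ (F : V → A → V) (H0 : V),
      ∀ s : List A, h s = List.foldl F H0 s)
    (ε : ℝ≥0∞)
    (hconst : ∀ s s' : List A, s ≠ s' → s.length ≤ n → s'.length ≤ n →
      (∑' h : List A → V, if h s = h s' then μ h else 0) = ε) :
    ∀ h ∈ μ.support, ∀ (s s' : List A) (c : A),
      (s ++ [c]).length ≤ n → (s' ++ [c]).length ≤ n →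
      h s ≠ h s' → h (s ++ [c]) ≠ h (s' ++ [c]) := by
  intro h hh s s' c hlen hlen' hne hext
  have hss' : s ≠ s' := fun e => hne (congrArg h e)
  have hlen_pre : s.length ≤ n ∧ s'.length ≤ n := by
    simp only [List.length_append, List.length_singleton] at hlen hlen'
    omega
  have hsub : collisionSet s s' ∩ μ.support ⊆ collisionSet (s ++ [c]) (s' ++ [c]) :=
    fun g ⟨hg, hgμ⟩ => IsIteratedHash.apply_append_eq (hiter g hgμ) hg [c]
  have hlt := μ.toOuterMeasure_lt_of_mem_diff hsub hne hext hh
  rw [μ.toOuterMeasure_collisionSet, μ.toOuterMeasure_collisionSet,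
    hconst s s' hss' hlen_pre.1 hlen_pre.2,
    hconst _ _ (by simpa using hss') hlen hlen'] at hlt
  exact lt_irrefl ε hlt

/-- if a finitely supported distribution on iterated hash functions has a
constant collision probability `ε` over all pairs of distinct strings of length at most
`n ≥ 2`, then every hash function in its support has a permuting compression: appending a
common character to two strings with distinct hash values (staying within length `n`)
yields distinct hash values. -/
theorem fixed_collision_prob_implies_permuting
    {A V : Type*} [Fintype V] [DecidableEq V] (n : ℕ) (hn : 2 ≤ n)
    (μ : PMF (List A → V)) (hfin : μ.support.Finite)
    (hiter : ∀ h ∈ μ.support, ∃ (F : V → A → V) (H0 : V),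
      ∀ s : List A, h s = List.foldl F H0 s)
    (ε : ℝ≥0∞)
    (hconst : ∀ s s' : List A, s ≠ s' → s.length ≤ n → s'.length ≤ n →
      (∑' h : List A → V, if h s = h s' then μ h else 0) = ε) :
    ∀ h ∈ μ.support, ∀ (s s' : List A) (c : A),
      (s ++ [c]).length ≤ n → (s' ++ [c]).length ≤ n →
      h s ≠ h s' → h (s ++ [c]) ≠ h (s' ++ [c]) :=
  fixed_collision_prob_implies_permuting_general n μ hiter ε hconst
end

section
/- Let p be a prime and let 1 ≤ n ≤ p. Working over the field 𝔽_p = ZMod p, with the Carter–Wegman polynomial hash h_t(s₁⋯s_k) = t^k + Σ_{i=1}^{k} sᵢ·t^{k−i}, there exist two distinct strings s, s' over 𝔽_p, each of length at most n, such that the set {t ∈ 𝔽_p : h_t(s) = h_t(s')} has exactly n elements. Hence the collision bound n/p for strings of length at most n is tight: for t uniform in 𝔽_p, P(h_t(s) = h_t(s')) = n/p for this pair. -/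
/-- The Carter–Wegman polynomial hash `h_t(s₁⋯s_k) = t^k + Σ_{i=1}^{k} sᵢ·t^{k−i}`,
computed as the iterated hash with compression function `(y, c) ↦ t·y + c` and initial
value `1`. -/
def cwHash {F : Type*} [CommRing F] (t : F) (s : List F) : F :=
  List.foldl (fun y c => t * y + c) 1 s

/-!
Every monic polynomial of degree `k` is `t ↦ h_t(s)` for a string `s` of length `k`, read off
its coefficients by Horner's scheme. Taking the monic polynomial `1 + ∏_{a ∈ S} (X - a)` for a
set `S` of `n` field elements gives a string `s` with `h_t(s) = h_t(ε) = 1` exactly for `t ∈ S`.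
-/

open Polynomial Finset

theorem cwHash_append_singleton {F : Type*} [CommRing F] (t : F) (s : List F) (c : F) :
    cwHash t (s ++ [c]) = t * cwHash t s + c := by
  simp [cwHash, List.foldl_append]

theorem Polynomial.Monic.divX {R : Type*} [Semiring R] {p : R[X]} (hp : p.Monic)
    (hdeg : 0 < p.natDegree) : p.divX.Monic := by
  rw [Monic, Polynomial.leadingCoeff, natDegree_divX_eq_natDegree_tsub_one, coeff_divX,
    Nat.sub_add_cancel hdeg]
  exact hp

theorem exists_cwHash_eq_eval_of_monic {F : Type*} [CommRing F] {P : F[X]} (hP : P.Monic) :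
    ∃ s : List F, s.length = P.natDegree ∧ ∀ t, cwHash t s = P.eval t := by
  induction hdeg : P.natDegree generalizing P with
  | zero =>
    refine ⟨[], rfl, fun t => ?_⟩
    simp [cwHash, hP.natDegree_eq_zero.mp hdeg]
  | succ k ih =>
    obtain ⟨s, hlen, heval⟩ := ih (hP.divX (by omega))
      (by rw [natDegree_divX_eq_natDegree_tsub_one, hdeg, Nat.add_sub_cancel])
    refine ⟨s ++ [P.coeff 0], by simp [hlen], fun t => ?_⟩
    rw [cwHash_append_singleton, heval]
    conv_rhs => rw [← X_mul_divX_add P]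
    simp only [eval_add, eval_mul, eval_X, eval_C]

theorem exists_cwHash_eq_cwHash_nil_iff_mem {F : Type*} [CommRing F] [IsDomain F]
    {S : Finset F} (hS : S.Nonempty) :
    ∃ s : List F, s.length = #S ∧ ∀ t, cwHash t s = cwHash t [] ↔ t ∈ S := by
  set Q : F[X] := ∏ a ∈ S, (X - C a)
  have hQdeg : Q.natDegree = #S := natDegree_finsetProd_X_sub_C_eq_card S id
  have hone_lt : (1 : F[X]).degree < Q.degree :=
    degree_lt_degree (by rw [natDegree_one, hQdeg]; exact hS.card_pos)
  have hQ : Q.Monic := monic_prod_X_sub_C id S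
  obtain ⟨s, hlen, heval⟩ := exists_cwHash_eq_eval_of_monic (hQ.add_of_left hone_lt)
  refine ⟨s, by rw [hlen, natDegree_add_eq_left_of_degree_lt hone_lt, hQdeg], fun t => ?_⟩
  rw [heval]
  simp [cwHash, Q, eval_prod, prod_eq_zero_iff, sub_eq_zero]

/-- over `𝔽_p = ZMod p` (`p` prime, `1 ≤ n ≤ p`) the CWPoly collision bound
`n/p` is tight: there exist two distinct strings of length at most `n` colliding for
exactly `n` values of `t`, so their collision probability is exactly `n / p`. -/
theorem cwpoly_bound_tight (p : ℕ) [Fact p.Prime] (n : ℕ) (hn1 : 1 ≤ n) (hnp : n ≤ p) :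
    ∃ s s' : List (ZMod p), s ≠ s' ∧ s.length ≤ n ∧ s'.length ≤ n ∧
      (Finset.univ.filter fun t : ZMod p => cwHash t s = cwHash t s').card = n ∧
      ((Finset.univ.filter fun t : ZMod p => cwHash t s = cwHash t s').card : ℚ) / p
        = (n : ℚ) / p := by
  obtain ⟨S, -, hS⟩ : ∃ S ⊆ (univ : Finset (ZMod p)), #S = n :=
    exists_subset_card_eq (by rwa [card_univ, ZMod.card])
  obtain ⟨s, hlen, hcollide⟩ := exists_cwHash_eq_cwHash_nil_iff_mem (card_pos.mp (hS ▸ hn1))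
  have hfilter : (univ.filter fun t : ZMod p => cwHash t s = cwHash t []) = S := by
    ext t
    simp [hcollide]
  refine ⟨s, [], ?_, by omega, by simp, by rw [hfilter, hS], by rw [hfilter, hS]⟩
  rintro rfl
  simp only [List.length_nil] at hlen
  omega
end

section
/- Let F be a finite field of cardinality p and n ≥ 1. For t ∈ F with t ≠ 0 and ζ ∈ F, define the modified Carter–Wegman polynomial hash of a string s = s₁⋯s_k over F (k ≤ n) by ĥ_{t,ζ}(s) = t^{k+1} + Σ_{i=1}^{k} sᵢ·t^{i} + ζ. If t is chosen uniformly at random among the p−1 nonzero elements of F and ζ uniformly at random in F, independently, then for any two distinct strings s, s' of lengths at most n and any hash values y, y' ∈ F, P(ĥ_{t,ζ}(s) = y ∧ ĥ_{t,ζ}(s') = y') ≤ (n+1)/((p−1)·p). Equivalently, the number of pairs (t, ζ) with t ≠ 0 satisfying both equations is at most n+1. In particular this modified family is (n+1)/(p−1)-almost strongly universal over strings of length at most n. -/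
/-!
Write `ĥ_{t,ζ}(s) = P_s(t) + ζ`, where `P_s = X^{k+1} + Σ sᵢ Xⁱ` is a polynomial of degree `k + 1`
with zero constant term. Since `P_s` determines `s`, for `s ≠ s'` the polynomial
`P_s - P_{s'} - (y - y')` is nonzero of degree at most `n + 1`. Every pair `(t, ζ)` solving both
hash equations has `t` among its roots, and `ζ = y - P_s(t)` is determined by `t`.
-/

open Polynomial

/-- The modified Carter–Wegman polynomial hash
`ĥ_{t,ζ}(s₁⋯s_k) = t^{k+1} + Σ_{i=1}^{k} sᵢ·t^{i} + ζ`. -/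
def mcwHash {F : Type*} [CommRing F] (t ζ : F) (s : List F) : F :=
  t ^ (s.length + 1) + (∑ i : Fin s.length, s.get i * t ^ ((i : ℕ) + 1)) + ζ

/-- Horner form of `X^{k+1} + Σ_{i=1}^{k} sᵢ Xⁱ`. -/
noncomputable def mcwPoly {R : Type*} [Semiring R] : List R → R[X]
  | [] => X
  | a :: s => X * (C a + mcwPoly s)

section mcwPoly

variable {R : Type*}

lemma eval_mcwPoly [CommRing R] (t : R) (s : List R) :
    (mcwPoly s).eval t = t ^ (s.length + 1) + ∑ i : Fin s.length, s.get i * t ^ ((i : ℕ) + 1) := by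
  induction s with
  | nil => simp [mcwPoly]
  | cons a s ih =>
    simp only [mcwPoly, eval_mul, eval_X, eval_add, eval_C, ih, List.length_cons,
      Fin.sum_univ_succ, List.get_eq_getElem, Fin.val_zero, Fin.val_succ, List.getElem_cons_zero,
      List.getElem_cons_succ]
    simp only [pow_succ _ (_ + 1), ← mul_assoc, ← Finset.sum_mul]
    ring

lemma mcwHash_eq_eval_mcwPoly_add [CommRing R] (t ζ : R) (s : List R) :
    mcwHash t ζ s = (mcwPoly s).eval t + ζ := by
  rw [eval_mcwPoly, mcwHash]

@[simp]
lemma coeff_mcwPoly_zero [Semiring R] (s : List R) : (mcwPoly s).coeff 0 = 0 := by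
  cases s <;> simp [mcwPoly]

lemma natDegree_mcwPoly [Semiring R] [Nontrivial R] (s : List R) :
    (mcwPoly s).natDegree = s.length + 1 := by
  induction s with
  | nil => simp [mcwPoly]
  | cons a s ih =>
    have h : (C a + mcwPoly s).natDegree = s.length + 1 := by rw [natDegree_C_add, ih]
    rw [mcwPoly, natDegree_X_mul (by rintro h0; simp [h0] at h), h, List.length_cons]

lemma mcwPoly_injective [Ring R] [Nontrivial R] : Function.Injective (mcwPoly (R := R)) := by
  intro s s' h
  induction s generalizing s' with
  | nil =>
    cases s' with
    | nil => rfl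
    | cons b s' => simpa [natDegree_mcwPoly] using congrArg natDegree h
  | cons a s ih =>
    cases s' with
    | nil => simpa [natDegree_mcwPoly] using congrArg natDegree h
    | cons b s' =>
      have h' : C a + mcwPoly s = C b + mcwPoly s' := isRegular_X.left h
      have hab : a = b := by simpa using congrArg (coeff · 0) h'
      subst hab
      rw [ih (add_left_cancel h')]

lemma mcwPoly_sub_mcwPoly_ne_C [Ring R] [Nontrivial R] {s s' : List R} (hne : s ≠ s') (c : R) :
    mcwPoly s - mcwPoly s' ≠ C c := by
  intro h
  have hc : c = 0 := by simpa using (congrArg (coeff · 0) h).symm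
  rw [hc, map_zero, sub_eq_zero] at h
  exact hne (mcwPoly_injective h)

end mcwPoly

lemma card_le_natDegree_of_forall_eval_add_eq {R : Type*} [CommRing R] [IsDomain R]
    [DecidableEq R] {p q : R[X]} {y y' : R} (hpq : p - q ≠ C (y - y')) (S : Finset (R × R))
    (hS : ∀ tz ∈ S, p.eval tz.1 + tz.2 = y ∧ q.eval tz.1 + tz.2 = y') :
    S.card ≤ (p - q - C (y - y')).natDegree := by
  have hne : p - q - C (y - y') ≠ 0 := sub_ne_zero.mpr hpq
  have hroots :
      Set.MapsTo Prod.fst (S : Set (R × R)) ((p - q - C (y - y')).roots.toFinset : Set R) := by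
    intro tz htz
    obtain ⟨h1, h2⟩ := hS tz htz
    rw [Finset.mem_coe, Multiset.mem_toFinset, mem_roots hne, IsRoot.def]
    simp only [eval_sub, eval_C]
    linear_combination h1 - h2
  have hinj : Set.InjOn Prod.fst (S : Set (R × R)) := by
    intro a ha b hb hab
    refine Prod.ext hab ?_
    have ha1 := (hS a ha).1
    have hb1 := (hS b hb).1
    rw [hab] at ha1
    linear_combination ha1 - hb1
  calc S.card ≤ (p - q - C (y - y')).roots.toFinset.card :=
        Finset.card_le_card_of_injOn _ hroots hinj
    _ ≤ (p - q - C (y - y')).roots.card := Multiset.toFinset_card_le _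
    _ ≤ (p - q - C (y - y')).natDegree := card_roots' _

theorem modified_cwpoly_almost_strongly_universal_general
    {F : Type*} [Field F] [Fintype F] [DecidableEq F] {n : ℕ}
    (s s' : List F) (hs : s.length ≤ n) (hs' : s'.length ≤ n) (hne : s ≠ s')
    (y y' : F) :
    (Finset.univ.filter fun tz : F × F =>
        tz.1 ≠ 0 ∧ mcwHash tz.1 tz.2 s = y ∧ mcwHash tz.1 tz.2 s' = y').card ≤ n + 1 ∧
    ((Finset.univ.filter fun tz : F × F =>
        tz.1 ≠ 0 ∧ mcwHash tz.1 tz.2 s = y ∧ mcwHash tz.1 tz.2 s' = y').card : ℚ)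
        / (((Fintype.card F : ℚ) - 1) * (Fintype.card F : ℚ))
      ≤ ((n : ℚ) + 1) / (((Fintype.card F : ℚ) - 1) * (Fintype.card F : ℚ)) := by
  have hdeg : (mcwPoly s - mcwPoly s' - C (y - y')).natDegree ≤ n + 1 := by
    rw [natDegree_sub_C]
    refine (natDegree_sub_le_of_le (natDegree_mcwPoly s).le (natDegree_mcwPoly s').le).trans ?_
    omega
  have hcard : (Finset.univ.filter fun tz : F × F =>
      tz.1 ≠ 0 ∧ mcwHash tz.1 tz.2 s = y ∧ mcwHash tz.1 tz.2 s' = y').card ≤ n + 1 := by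
    refine (card_le_natDegree_of_forall_eval_add_eq (mcwPoly_sub_mcwPoly_ne_C hne _) _ ?_).trans hdeg
    intro tz htz
    simpa [mcwHash_eq_eval_mcwPoly_add] using (Finset.mem_filter.mp htz).2.2
  refine ⟨hcard, div_le_div_of_nonneg_right (by exact_mod_cast hcard) ?_⟩
  have hp : (1 : ℚ) ≤ Fintype.card F := by exact_mod_cast Fintype.card_pos
  exact mul_nonneg (sub_nonneg.mpr hp) (by positivity)

/-- for any two distinct strings of length at most `n` over a finite field of
cardinality `p` and any target values `y, y'`, at most `n + 1` pairs `(t, ζ)` with `t ≠ 0`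
satisfy both hash equations; hence for `t` uniform among nonzero elements and `ζ` uniform
in `F`, `P(ĥ(s) = y ∧ ĥ(s') = y') ≤ (n+1)/((p−1)·p)`; the modified family is
`(n+1)/(p−1)`-almost strongly universal. -/
theorem modified_cwpoly_almost_strongly_universal
    {F : Type*} [Field F] [Fintype F] [DecidableEq F] {n : ℕ} (hn : 1 ≤ n)
    (s s' : List F) (hs : s.length ≤ n) (hs' : s'.length ≤ n) (hne : s ≠ s')
    (y y' : F) :
    (Finset.univ.filter fun tz : F × F =>
        tz.1 ≠ 0 ∧ mcwHash tz.1 tz.2 s = y ∧ mcwHash tz.1 tz.2 s' = y').card ≤ n + 1 ∧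
    ((Finset.univ.filter fun tz : F × F =>
        tz.1 ≠ 0 ∧ mcwHash tz.1 tz.2 s = y ∧ mcwHash tz.1 tz.2 s' = y').card : ℚ)
        / (((Fintype.card F : ℚ) - 1) * (Fintype.card F : ℚ))
      ≤ ((n : ℚ) + 1) / (((Fintype.card F : ℚ) - 1) * (Fintype.card F : ℚ)) :=
  modified_cwpoly_almost_strongly_universal_general s s' hs hs' hne y y'
end

section
/- Let K be a finite field of characteristic 2 with 2^L elements, and let x ∈ K be an element such that 1, x, x², …, x^{L−1} are linearly independent over the prime subfield (equivalently, x generates K over GF(2)). Let Σ be a finite alphabet. For a function Γ : Σ → K and an initial value H₀ ∈ K, define the tabulated hash of a string s = s₁⋯s_k by h_{Γ,H₀}(s) = x^k·H₀ + Σ_{i=1}^{k} x^{k−i}·Γ(sᵢ) (the iterated hash with compression function (y,c) ↦ x·y + Γ(c) and initial value H₀). If Γ is chosen uniformly at random among all functions Σ → K and H₀ uniformly at random in K, independently, then for any two distinct nonempty strings s, s' over Σ of lengths at most L and any y, y' ∈ K, P(h_{Γ,H₀}(s) = y ∧ h_{Γ,H₀}(s') = y') = 1/2^{2L}. That is, the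 Tabulated family is pairwise independent over strings of length at most L. -/
/-!
The pair `(h s, h s')` depends `K`-linearly on `(Γ, H₀)`, so every value pair is hit equally
often as soon as this linear map onto `K × K` is surjective, which follows from a
nonvanishing `2 × 2` minor: evaluating at `H₀ = 1` and at `Γ` the indicator of a letter `c`
standing at a position where `s` and `s'` differ gives, for `|s'| ≤ |s|`, the minor
`x ^ |s'| * (x ^ (|s| - |s'|) * h s' - h s)`. Aligned at the left end of the strings, the second
factor is a combination of `1, x, …, x ^ (|s| - 1)` with coefficients in `GF(2)`, one of them
`-1`, so it is nonzero by linear independence. The factor `x ^ |s'|` vanishes only when `x = 0`,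
which forces `L ≤ 1`, and then `s, s'` are distinct letters.
-/

open Finset

theorem AddMonoidHom.card_fiber_div_card_of_surjective {V W : Type*} [AddGroup V] [AddGroup W]
    [Fintype V] [Fintype W] [DecidableEq W] {f : V →+ W} (hf : Function.Surjective f) (w : W) :
    ((univ.filter fun v => f v = w).card : ℚ) / Fintype.card V = 1 / Fintype.card W := by
  have hfiber : (univ.filter fun v => f v = w).card = Nat.card f.ker := by
    rw [← Fintype.card_subtype, ← Nat.card_eq_fintype_card]
    exact Nat.card_congr (f.fiberEquivKerOfSurjective hf w)
  have hcard : Fintype.card V = Fintype.card W * Nat.card f.ker := by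
    rw [← Nat.card_eq_fintype_card, ← Nat.card_eq_fintype_card,
      f.ker.card_eq_card_quotient_mul_card_addSubgroup,
      Nat.card_congr (QuotientAddGroup.quotientKerEquivOfSurjective f hf).toEquiv]
  have hker : (Nat.card f.ker : ℚ) ≠ 0 := by exact_mod_cast Nat.card_pos.ne'
  rw [hfiber, hcard, Nat.cast_mul]
  field_simp

theorem LinearMap.prod_surjective_of_det_ne_zero {K V : Type*} [Field K] [AddCommGroup V]
    [Module K V] (f g : V →ₗ[K] K) (v w : V) (hdet : f v * g w - f w * g v ≠ 0) :
    Function.Surjective (f.prod g) := by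
  rintro ⟨a, b⟩
  set d := f v * g w - f w * g v with hd
  refine ⟨((a * g w - b * f w) / d) • v + ((b * f v - a * g v) / d) • w, ?_⟩
  ext <;> simp only [LinearMap.prod_apply, Function.prod, map_add, map_smul, smul_eq_mul,
    Prod.fst_add, Prod.snd_add, Prod.smul_fst, Prod.smul_snd] <;> field_simp <;> rw [hd] <;> ring

theorem List.pow_mul_foldl_horner_eq_sum {R A : Type*} [CommSemiring R] (x : R) (g : A → R)
    (s : List A) (z : R) {n : ℕ} (hn : s.length ≤ n) :
    x ^ (n - s.length) * s.foldl (fun v a => x * v + g a) z =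
      x ^ n * z + ∑ i ∈ Finset.range n, x ^ (n - 1 - i) * s[i]?.elim 0 g := by
  induction s generalizing z n with
  | nil => simp
  | cons a s ih =>
    obtain ⟨m, rfl⟩ : ∃ m, n = m + 1 := ⟨n - 1, by simp at hn; omega⟩
    rw [foldl_cons, length_cons, Nat.add_sub_add_right, ih _ (by simpa using hn),
      Finset.sum_range_succ']
    simp only [getElem?_cons_succ, getElem?_cons_zero, Option.elim_some, Nat.add_sub_cancel,
      Nat.sub_zero, Nat.sub_sub, Nat.add_comm 1]
    ring

theorem LinearIndependent.eq_zero_of_sum_smul_pow_eq_zero {F K : Type*} [CommRing F] [Ring K]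
    [Module F K] {x : K} {L : ℕ} (hx : LinearIndependent F fun i : Fin L => x ^ (i : ℕ))
    {n : ℕ} (hn : n ≤ L) {ε : ℕ → F} (h : ∑ i ∈ range n, ε i • x ^ (n - 1 - i) = 0)
    {i : ℕ} (hi : i < n) : ε i = 0 := by
  rw [← sum_range_reflect] at h
  have hrev := Fintype.linearIndependent_iff.mp (hx.comp (Fin.castLE hn) (Fin.castLE_injective hn))
    (fun j => ε (n - 1 - j)) <| by
      simp only [Function.comp_apply, Fin.val_castLE]
      rw [Fin.sum_univ_eq_sum_range (fun j => ε (n - 1 - j) • x ^ j), ← h]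
      refine sum_congr rfl fun j hj => ?_
      rw [mem_range] at hj
      congr 2
      omega
  simpa [show n - 1 - (n - 1 - i) = i by omega] using hrev ⟨n - 1 - i, by omega⟩

theorem List.exists_getElem?_eq_some_ne_of_length_le {α : Type*} {l l' : List α} (hne : l ≠ l')
    (hl : l'.length ≤ l.length) :
    ∃ (i : ℕ) (a : α), l[i]? = some a ∧ l'[i]? ≠ some a := by
  by_contra! H
  refine hne (List.ext_getElem? fun i => ?_)
  cases hi : l[i]? with
  | none =>
    exact (List.getElem?_eq_none (hl.trans (List.getElem?_eq_none_iff.mp hi))).symm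
  | some a => exact (H i a hi).symm

def tabulatedHash {R A : Type*} [CommSemiring R] (x : R) (s : List A) :
    ((A → R) × R) →ₗ[R] R :=
  s.foldl (fun φ c => x • φ + (LinearMap.proj c).comp (LinearMap.fst R (A → R) R))
    (LinearMap.snd R (A → R) R)

section TabulatedHash

variable {R A : Type*} [CommSemiring R] (x : R)

theorem tabulatedHash_apply (s : List A) (gH : (A → R) × R) :
    tabulatedHash x s gH = s.foldl (fun v c => x * v + gH.1 c) gH.2 := by
  suffices ∀ φ : ((A → R) × R) →ₗ[R] R,
      s.foldl (fun φ c => x • φ + (LinearMap.proj c).comp (LinearMap.fst R (A → R) R)) φ gH =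
        s.foldl (fun v c => x * v + gH.1 c) (φ gH) from this _
  induction s with
  | nil => simp
  | cons c s ih => intro φ; simp [ih]

theorem tabulatedHash_zero_one (s : List A) : tabulatedHash x s (0, 1) = x ^ s.length := by
  have helim : ∀ o : Option A, o.elim 0 (0 : A → R) = 0 := by rintro (_ | _) <;> rfl
  simpa [tabulatedHash_apply, helim] using List.pow_mul_foldl_horner_eq_sum x 0 s 1 le_rfl

end TabulatedHash

theorem tabulatedHash_prod_surjective_of_pow_ne_zero {F K A : Type*} [CommRing F] [Nontrivial F]
    [Field K] [Algebra F K] [DecidableEq A] {x : K} {L : ℕ}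
    (hx : LinearIndependent F fun i : Fin L => x ^ (i : ℕ)) {s s' : List A} (hne : s ≠ s')
    (hs : s.length ≤ L) (hs's : s'.length ≤ s.length) (hx' : x ^ s'.length ≠ 0) :
    Function.Surjective ((tabulatedHash x s).prod (tabulatedHash x s')) := by
  obtain ⟨i, c, hsi, hs'i⟩ := List.exists_getElem?_eq_some_ne_of_length_le hne hs's
  set k := s.length
  set χ : A → F := Pi.single c 1
  set w : (A → K) × K := (fun a => algebraMap F K (χ a), 0)
  have hwsum : ∀ t : List A, t.length ≤ k →
      x ^ (k - t.length) * tabulatedHash x t w =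
        ∑ j ∈ range k, t[j]?.elim 0 χ • x ^ (k - 1 - j) := by
    intro t ht
    rw [tabulatedHash_apply, List.pow_mul_foldl_horner_eq_sum x _ t _ ht, mul_zero, zero_add]
    refine sum_congr rfl fun j _ => ?_
    cases t[j]? <;> simp [w, Algebra.smul_def, mul_comm]
  apply LinearMap.prod_surjective_of_det_ne_zero _ _ (0, 1) w
  have hminor : x ^ k * tabulatedHash x s' w - tabulatedHash x s w * x ^ s'.length =
      x ^ s'.length *
        ∑ j ∈ range k, (s'[j]?.elim 0 χ - s[j]?.elim 0 χ) • x ^ (k - 1 - j) := by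
    have hs_sum := hwsum s le_rfl
    rw [Nat.sub_self, pow_zero, one_mul] at hs_sum
    rw [← pow_sub_mul_pow x hs's]
    simp only [sub_smul, sum_sub_distrib, ← hs_sum, ← hwsum s' hs's]
    ring
  rw [tabulatedHash_zero_one, tabulatedHash_zero_one, hminor]
  refine mul_ne_zero hx' fun h => ?_
  have := hx.eq_zero_of_sum_smul_pow_eq_zero hs h (List.getElem?_eq_some_iff.mp hsi).1
  have hχ' : s'[i]?.elim 0 χ = 0 := by
    cases h' : s'[i]? with
    | none => rfl
    | some b => exact Pi.single_eq_of_ne (fun hb : b = c => hs'i (hb ▸ h')) 1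
  simp [hsi, hχ', χ] at this

theorem tabulatedHash_prod_surjective {F K A : Type*} [CommRing F] [Nontrivial F]
    [Field K] [Algebra F K] [DecidableEq A] {x : K} {L : ℕ}
    (hx : LinearIndependent F fun i : Fin L => x ^ (i : ℕ)) {s s' : List A} (hne : s ≠ s')
    (hs : s.length ≤ L) (hs' : s'.length ≤ L) :
    Function.Surjective ((tabulatedHash x s).prod (tabulatedHash x s')) := by
  wlog hs's : s'.length ≤ s.length generalizing s s'
  · intro ⟨a, b⟩
    obtain ⟨v, hv⟩ := this hne.symm hs' hs (by omega) (b, a)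
    exact ⟨v, by simpa [and_comm] using hv⟩
  by_cases hx' : x ^ s'.length = 0
  · have hk' : s'.length ≠ 0 := fun h => by simp [h] at hx'
    have hx0 : x = 0 := (pow_eq_zero_iff hk').mp hx'
    have hL : L ≤ 1 := by
      by_contra! hL
      simpa [hx0] using hx.ne_zero ⟨1, hL⟩
    obtain ⟨a, rfl⟩ := List.length_eq_one_iff.mp (show s.length = 1 by omega)
    obtain ⟨b, rfl⟩ := List.length_eq_one_iff.mp (show s'.length = 1 by omega)
    have hab : a ≠ b := fun h => hne (h ▸ rfl)
    apply LinearMap.prod_surjective_of_det_ne_zero _ _ (Pi.single a 1, 0) (Pi.single b 1, 0)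
    simp [tabulatedHash_apply, hab, hab.symm]
  · exact tabulatedHash_prod_surjective_of_pow_ne_zero hx hne hs hs's hx'

theorem tabulated_pairwise_independent_general
    {K : Type*} [Field K] [Fintype K] [DecidableEq K]
    [Algebra (ZMod 2) K] (L : ℕ) (hcard : Fintype.card K = 2 ^ L)
    (x : K) (hx : LinearIndependent (ZMod 2) fun i : Fin L => x ^ (i : ℕ))
    {A : Type*} [Fintype A] [DecidableEq A]
    (s s' : List A) (hs : s.length ≤ L) (hs' : s'.length ≤ L)
    (hne : s ≠ s') (y y' : K) :
    ((Finset.univ.filter fun gH : (A → K) × K =>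
        List.foldl (fun v c => x * v + gH.1 c) gH.2 s = y ∧
        List.foldl (fun v c => x * v + gH.1 c) gH.2 s' = y').card : ℚ)
      / Fintype.card ((A → K) × K) = 1 / 2 ^ (2 * L) := by
  have hsurj := tabulatedHash_prod_surjective hx hne hs hs'
  have hcount := AddMonoidHom.card_fiber_div_card_of_surjective
    (f := ((tabulatedHash x s).prod (tabulatedHash x s')).toAddMonoidHom) hsurj (y, y')
  have hcardK2 : Fintype.card (K × K) = 2 ^ (2 * L) := by
    rw [Fintype.card_prod, hcard, ← pow_add, two_mul]
  rw [hcardK2] at hcount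
  simpa [tabulatedHash_apply, Prod.ext_iff] using hcount

/-- the Tabulated family is pairwise independent over strings of length at
most `L`. Here `K` is a finite field of characteristic 2 with `2^L` elements, `x ∈ K` has
`1, x, …, x^{L−1}` linearly independent over the prime subfield `GF(2) = ZMod 2`, and the
hash of `s₁⋯s_k` with table `Γ : A → K` and initial value `H₀` is the iterated hash
`x^k·H₀ + Σ_{i=1}^{k} x^{k−i}·Γ(sᵢ)` (compression `(y,c) ↦ x·y + Γ(c)`). For `Γ` and `H₀`
uniform and independent, any two distinct nonempty strings of length at most `L` take any
prescribed pair of hash values with probability exactly `1/2^{2L}`. -/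
theorem tabulated_pairwise_independent
    {K : Type*} [Field K] [Fintype K] [DecidableEq K] [CharP K 2]
    [Algebra (ZMod 2) K] (L : ℕ) (hL : 1 ≤ L) (hcard : Fintype.card K = 2 ^ L)
    (x : K) (hx : LinearIndependent (ZMod 2) fun i : Fin L => x ^ (i : ℕ))
    {A : Type*} [Fintype A] [DecidableEq A]
    (s s' : List A) (hs : s.length ≤ L) (hs' : s'.length ≤ L)
    (hsnil : s ≠ []) (hs'nil : s' ≠ []) (hne : s ≠ s') (y y' : K) :
    ((Finset.univ.filter fun gH : (A → K) × K =>
        List.foldl (fun v c => x * v + gH.1 c) gH.2 s = y ∧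
        List.foldl (fun v c => x * v + gH.1 c) gH.2 s' = y').card : ℚ)
      / Fintype.card ((A → K) × K) = 1 / 2 ^ (2 * L) :=
  tabulated_pairwise_independent_general L hcard x hx s s' hs hs' hne y y'
end

section
/- Let L ≥ 1 and let V be the set of L-bit values (Fin (2^L), identified with bit vectors with bitwise XOR ⊕). Let A be a uniformly random permutation of V and H₀ a uniformly random element of V, chosen independently, and define the Pearson hash of a string s over the alphabet V by the iterated scheme with compression function (y, c) ↦ A(y ⊕ c) and initial value H₀. Then for any character a ∈ V, any n ≥ 2, and any two distinct lengths r, r' with 1 ≤ r, r' ≤ n, the probability that the unary strings a^r (the character a repeated r times) and a^{r'} collide satisfies P(h(a^r) = h(a^{r'})) ≤ (max_{1 ≤ i ≤ n−1} d(i))/2^L, where d(i) denotes the number of positive divisors of i. That is, Pearson hashing is (max_{i<n} d(i)/2^L)-almost universal over unary strings of length at most n. -/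
/-!
With `σ = A * Equiv.xor a`, the hash of `a ^ k` is `σ ^ k H₀`, so `a ^ r'` and `a ^ (r' + m)` collide
iff `σ ^ m H₀ = H₀`; as `A ↦ σ` is a bijection, we count pairs `(f, x)` with `f ^ m x = x`.
Then the cycle of `x` under `f` has some length `D ∣ m`, and for each `D` at most `(N - 1)!` of
the `N!` permutations put `x` on a cycle of length `D` (cutting `x` out of its cycle shortens it
by one). Summing over `x` and `D ∣ m` bounds the collision count by `d(m) · N!` out of `N! · N`.
-/

open Finset Function
open scoped Nat

theorem Nat.mul_factorial_pred_le (n : ℕ) : n * (n - 1)! ≤ n ! := by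
  rcases eq_or_ne n 0 with rfl | hn
  · simp
  · exact (Nat.mul_factorial_pred hn).le

theorem List.foldl_replicate_eq_iterate {α β : Type*} (f : α → β → α) (b : β) (k : ℕ) (x : α) :
    (List.replicate k b).foldl f x = (f · b)^[k] x := by
  induction k generalizing x with
  | zero => rfl
  | succ k ih => rw [List.replicate_succ, List.foldl_cons, ih, iterate_succ_apply]

namespace Equiv.Perm

variable {α : Type*} [DecidableEq α]

/-- `swap x (f x) * f` fixes `x` and sends `f⁻¹ x` to `f x`, cutting `x` out of its cycle. -/
theorem minimalPeriod_swap_mul {f : Perm α} {x : α} {d : ℕ}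
    (hx : minimalPeriod f x = d + 2) :
    minimalPeriod (swap x (f x) * f) (f x) = d + 1 := by
  set g := swap x (f x) * f
  have hne : ∀ j ≠ 0, j < d + 2 → f^[j] x ≠ x := fun j hj hjd =>
    not_isPeriodicPt_of_pos_of_lt_minimalPeriod hj (hx ▸ hjd)
  have hne_succ : ∀ j ≠ 0, j < d + 2 → f^[j + 1] x ≠ f x := fun j hj hjd h =>
    hne j hj hjd (f.injective (by rwa [← iterate_succ_apply' f]))
  have horbit : ∀ k ≤ d, g^[k] (f x) = f^[k + 1] x := by
    intro k hk
    induction k with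
    | zero => rfl
    | succ k ih =>
      rw [iterate_succ_apply', ih (by omega), coe_mul, comp_apply, ← iterate_succ_apply' f]
      exact swap_apply_of_ne_of_ne (hne _ (by omega) (by omega)) (hne_succ _ (by omega) (by omega))
  have hper : IsPeriodicPt g (d + 1) (f x) := by
    rw [IsPeriodicPt, IsFixedPt, iterate_succ_apply', horbit d le_rfl, coe_mul, comp_apply,
      ← iterate_succ_apply' f,
      show (d + 1).succ = minimalPeriod f x from hx.symm, iterate_minimalPeriod, swap_apply_left]
  refine le_antisymm (hper.minimalPeriod_le d.succ_pos) (not_lt.1 fun hlt => ?_)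
  have hpos := hper.minimalPeriod_pos d.succ_pos
  have hret := iterate_minimalPeriod (f := g) (x := f x)
  rw [horbit _ (by omega)] at hret
  exact hne_succ _ hpos.ne' (by omega) hret

theorem swap_mul_apply_of_apply_eq_self {f : Perm α} {x s : α} (hsx : s ≠ x) (hs : f s = s) :
    (swap x (f x) * f) s = s := by
  rw [mul_apply, hs]
  exact swap_apply_of_ne_of_ne hsx fun h => hsx (f.injective (hs.trans h))

variable [Fintype α]

theorem card_forall_mem_apply_eq_self (T : Finset α) :
    #{f : Perm α | ∀ a ∈ T, f a = a} = (Fintype.card α - #T)! := by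
  have hfix : #{f : Perm α | ∀ a ∈ T, f a = a}
      = Fintype.card {f : Perm α // ∀ a, ¬a ∉ T → f a = a} := by
    simp only [Fintype.card_subtype, not_not]
  rw [hfix, ← Fintype.card_congr (Equiv.Perm.subtypeEquivSubtypePerm _), Fintype.card_perm,
    Fintype.card_subtype, filter_not, card_sdiff_of_subset (subset_univ _), card_univ,
    filter_mem_eq_inter, univ_inter]

/-- Induction on `d`, cutting `x` out of its cycle; `S` collects the points cut out so far. -/
theorem card_minimalPeriod_eq_le (d : ℕ) {x : α} {S : Finset α} (hx : x ∉ S) :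
    #{f : Perm α | minimalPeriod f x = d + 1 ∧ ∀ s ∈ S, f s = s}
      ≤ (Fintype.card α - 1 - #S)! := by
  induction d generalizing x S with
  | zero =>
    have hfix : ∀ f : Perm α, (minimalPeriod f x = 0 + 1 ∧ ∀ s ∈ S, f s = s) ↔
        ∀ s ∈ insert x S, f s = s := fun f => by
      rw [forall_mem_insert, zero_add, minimalPeriod_eq_one_iff_isFixedPt, IsFixedPt]
    rw [filter_congr fun f _ => hfix f, card_forall_mem_apply_eq_self, card_insert_of_notMem hx,
      Nat.sub_sub, add_comm]
  | succ d ih =>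
    have hmaps : ∀ f ∈ ({f : Perm α | minimalPeriod f x = d + 2 ∧ ∀ s ∈ S, f s = s} : Finset _),
        f x ∈ univ \ insert x S := by
      simp only [mem_filter, mem_univ, true_and, mem_sdiff, mem_insert, not_or]
      rintro f ⟨hper, hfix⟩
      have hfx : f x ≠ x := fun h => by
        rw [minimalPeriod_eq_one_iff_isFixedPt.2 h] at hper
        omega
      exact ⟨hfx, fun hS => hfx (f.injective (hfix _ hS))⟩
    have hfiber : ∀ y ∈ univ \ insert x S,
        #{f ∈ ({f : Perm α | minimalPeriod f x = d + 2 ∧ ∀ s ∈ S, f s = s} : Finset _) | f x = y}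
          ≤ (Fintype.card α - 1 - #(insert x S))! := by
      intro y hy
      refine (card_le_card_of_injOn (swap x y * ·) ?_ fun f₁ _ f₂ _ h => mul_left_cancel h).trans
        (ih (mem_sdiff.1 hy).2)
      intro f hf
      simp only [coe_filter, mem_filter, mem_univ, true_and, Set.mem_ofPred_eq] at hf ⊢
      obtain ⟨⟨hper, hfix⟩, rfl⟩ := hf
      rw [forall_mem_insert]
      refine ⟨minimalPeriod_swap_mul hper, by simp, fun s hs => ?_⟩
      exact swap_mul_apply_of_apply_eq_self (fun h => hx (h ▸ hs)) (hfix s hs)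
    refine (card_le_mul_card_image_of_maps_to hmaps _ hfiber).trans ?_
    rw [card_sdiff_of_subset (subset_univ _), card_univ, card_insert_of_notMem hx]
    rw [mul_comm, show Fintype.card α - (#S + 1) = Fintype.card α - 1 - #S by omega,
      Nat.sub_sub _ _ (#S + 1), ← Nat.sub_sub, ← Nat.sub_sub]
    exact Nat.mul_factorial_pred_le _

theorem card_pow_apply_eq_self_le {m : ℕ} (hm : m ≠ 0) (x : α) :
    #{f : Perm α | (f ^ m) x = x} ≤ m.divisors.card * (Fintype.card α - 1)! := by
  rw [mul_comm]
  refine card_le_mul_card_image_of_maps_to (f := fun f : Perm α => minimalPeriod f x) ?_ _ ?_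
  · intro f hf
    rw [mem_filter, ← IsFixedPt, coe_pow, ← IsPeriodicPt] at hf
    exact Nat.mem_divisors.2 ⟨hf.2.minimalPeriod_dvd, hm⟩
  · intro D hD
    obtain ⟨d, rfl⟩ := Nat.exists_eq_succ_of_ne_zero (Nat.pos_of_mem_divisors hD).ne'
    refine (card_le_card fun f hf => ?_).trans (card_minimalPeriod_eq_le d (notMem_empty x))
    simp_all

theorem card_pow_apply_eq_self_prod_le {m : ℕ} (hm : m ≠ 0) :
    #{p : Perm α × α | (p.1 ^ m) p.2 = p.2} ≤ m.divisors.card * (Fintype.card α)! := by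
  calc #{p : Perm α × α | (p.1 ^ m) p.2 = p.2}
      = ∑ x : α, #{f : Perm α | (f ^ m) x = x} := by
        simp only [card_filter]
        exact Fintype.sum_prod_type_right _
    _ ≤ ∑ _x : α, m.divisors.card * (Fintype.card α - 1)! :=
        sum_le_sum fun x _ => card_pow_apply_eq_self_le hm x
    _ = m.divisors.card * (Fintype.card α * (Fintype.card α - 1)!) := by
        rw [sum_const, card_univ, smul_eq_mul, mul_left_comm]
    _ ≤ m.divisors.card * (Fintype.card α)! :=
        Nat.mul_le_mul_left _ (Nat.mul_factorial_pred_le _)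

end Equiv.Perm

open Equiv

section UnaryCollision

variable {L : ℕ}

theorem foldl_apply_xor_replicate (A : Perm (Fin (2 ^ L))) (H a : Fin (2 ^ L)) (k : ℕ) :
    (List.replicate k a).foldl (fun y c => A (y ^^^ c)) H = ((A * Equiv.xor a) ^ k) H := by
  rw [List.foldl_replicate_eq_iterate, Perm.coe_pow]
  congr
  funext y
  rw [Perm.mul_apply, xor_apply, LawfulXor.xor_comm]

theorem card_unary_collision_le (a : Fin (2 ^ L)) (r : ℕ) {m : ℕ} (hm : m ≠ 0) :
    #{AH : Perm (Fin (2 ^ L)) × Fin (2 ^ L) |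
        (List.replicate (r + m) a).foldl (fun y c => AH.1 (y ^^^ c)) AH.2
          = (List.replicate r a).foldl (fun y c => AH.1 (y ^^^ c)) AH.2}
      ≤ m.divisors.card * (2 ^ L)! := by
  rw [card_equiv ((Equiv.mulRight (Equiv.xor a)).prodCongr (Equiv.refl _))
    (t := {p : Perm (Fin (2 ^ L)) × Fin (2 ^ L) | (p.1 ^ m) p.2 = p.2}) fun AH => by
      simp [foldl_apply_xor_replicate, pow_add]]
  simpa only [Fintype.card_fin] using Perm.card_pow_apply_eq_self_prod_le (α := Fin (2 ^ L)) hm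

end UnaryCollision

theorem pearson_unary_almost_universal_general (L : ℕ) (a : Fin (2 ^ L))
    (n : ℕ) (r r' : ℕ) (hr1 : 1 ≤ r) (hr1' : 1 ≤ r')
    (hrn : r ≤ n) (hr'n : r' ≤ n) (hrr : r ≠ r') :
    ((Finset.univ.filter fun AH : Equiv.Perm (Fin (2 ^ L)) × Fin (2 ^ L) =>
        List.foldl (fun y c => AH.1 (y ^^^ c)) AH.2 (List.replicate r a)
          = List.foldl (fun y c => AH.1 (y ^^^ c)) AH.2 (List.replicate r' a)).card : ℚ)
      / Fintype.card (Equiv.Perm (Fin (2 ^ L)) × Fin (2 ^ L))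
      ≤ (((Finset.Icc 1 (n - 1)).sup fun i => i.divisors.card : ℕ) : ℚ) / 2 ^ L := by
  wlog hlt : r' < r generalizing r r'
  · simpa only [eq_comm] using this r' r hr1' hr1 hr'n hrn hrr.symm (by omega)
  obtain ⟨m, rfl⟩ := Nat.exists_eq_add_of_le hlt.le
  have hm : m ≠ 0 := by omega
  have hdiv : m.divisors.card ≤ (Icc 1 (n - 1)).sup fun i => i.divisors.card :=
    le_sup (f := fun i : ℕ => i.divisors.card) (mem_Icc.2 ⟨by omega, by omega⟩)
  rw [Fintype.card_prod, Fintype.card_perm, Fintype.card_fin,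
    div_le_div_iff₀ (by positivity) (by positivity), Nat.cast_mul, ← mul_assoc]
  exact_mod_cast Nat.mul_le_mul_right (2 ^ L)
    ((card_unary_collision_le a r' hm).trans (Nat.mul_le_mul_right _ hdiv))

/-- Pearson hashing is `(max_{1 ≤ i ≤ n−1} d(i))/2^L`-almost universal over
unary strings of length at most `n`. The hash of a string over the `L`-bit values
(`Fin (2^L)`, identified with bit vectors under bitwise XOR `^^^`) is the iterated hash
with compression function `(y, c) ↦ A (y ^^^ c)` where `A` is a uniformly random
permutation of `Fin (2^L)`, and the initial value `H₀` is uniform and independent of `A`.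
`d(i) = i.divisors.card` is the number of positive divisors of `i`. -/
theorem pearson_unary_almost_universal (L : ℕ) (hL : 1 ≤ L) (a : Fin (2 ^ L))
    (n : ℕ) (hn : 2 ≤ n) (r r' : ℕ) (hr1 : 1 ≤ r) (hr1' : 1 ≤ r')
    (hrn : r ≤ n) (hr'n : r' ≤ n) (hrr : r ≠ r') :
    ((Finset.univ.filter fun AH : Equiv.Perm (Fin (2 ^ L)) × Fin (2 ^ L) =>
        List.foldl (fun y c => AH.1 (y ^^^ c)) AH.2 (List.replicate r a)
          = List.foldl (fun y c => AH.1 (y ^^^ c)) AH.2 (List.replicate r' a)).card : ℚ)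
      / Fintype.card (Equiv.Perm (Fin (2 ^ L)) × Fin (2 ^ L))
      ≤ (((Finset.Icc 1 (n - 1)).sup fun i => i.divisors.card : ℕ) : ℚ) / 2 ^ L :=
  pearson_unary_almost_universal_general L a n r r' hr1 hr1' hrn hr'n hrr
end

section
/- Let L ≥ 1 and n ≥ 1, and let H be a nonempty finite set of iterated hash functions from binary strings (strings over a two-character alphabet) of length at most n to Fin (2^L), from which h is drawn uniformly at random. If H is ε-almost universal for some ε < 1 — i.e., P(h(s)=h(s')) ≤ ε for all distinct binary strings s, s' of length at most n — then n ≤ L·(ε·2^{L·(2^{L+1}+1)} + 1). -/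
/-!
For `m = 2 ^ L`, the orbit of `H₀` under `x ↦ F x false` in a set of size `m` is periodic from
step `m` on, with period dividing `m!`; so every iterated hash identifies `0^m` and `0^(m + m!)`,
and `ε < 1` forces `n < m + m!`. On the other hand, when `n > L` every hash has a collision among
any `m + 1` strings of length `L + 1`, so some fixed pair collides with probability at least
`1 / ((m + 1) m)`. Together, `n (m + 1) m ≤ m ^ (2m + 1) = 2 ^ (L (2 ^ (L + 1) + 1))` gives
`n ≤ ε 2 ^ (L (2 ^ (L + 1) + 1))`.
-/

open Finset Function
open scoped Nat

theorem Nat.add_factorial_le_pow_self {m : ℕ} (hm : 2 ≤ m) : m + m ! ≤ m ^ m := by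
  have hpred : (m - 1) ! ≤ (m - 1) ^ (m - 1) := (m - 1).factorial_le_pow
  have hlt : (m - 1) ^ (m - 1) < m ^ (m - 1) := Nat.pow_lt_pow_left (by omega) (by omega)
  calc m + m ! = m * (1 + (m - 1)!) := by rw [mul_add, Nat.mul_factorial_pred (by omega), mul_one]
    _ ≤ m * m ^ (m - 1) := by gcongr; omega
    _ = m ^ m := by rw [← pow_succ']; congr 1; omega

theorem Nat.mul_le_pow_of_lt_add_factorial {m n : ℕ} (hm : 2 ≤ m) (hn : n < m + m !) :
    n * ((m + 1) * m) ≤ m ^ (2 * m + 1) := by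
  have hpow := Nat.add_factorial_le_pow_self hm
  calc n * ((m + 1) * m) ≤ m ^ m * (m ^ m * m) := by
        gcongr
        · omega
        · have := m.factorial_pos; omega
    _ = m ^ (2 * m + 1) := by ring

theorem Nat.cast_le_mul_of_one_div_le {n D X : ℕ} {ε : ℚ} (hD : 0 < D) (hε : 1 / (D : ℚ) ≤ ε)
    (h : n * D ≤ X) : (n : ℚ) ≤ ε * X := by
  have hε0 : 0 ≤ ε := (by positivity : (0 : ℚ) ≤ 1 / D).trans hε
  rw [div_le_iff₀ (by exact_mod_cast hD)] at hε
  calc (n : ℚ) ≤ n * (ε * D) := le_mul_of_one_le_right n.cast_nonneg hε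
    _ = ε * (n * D) := by ring
    _ ≤ ε * X := by gcongr; exact_mod_cast h

theorem Function.iterate_card_mem_periodicPts {α : Type*} [Fintype α] (f : α → α) (x : α) :
    f^[Fintype.card α] x ∈ periodicPts f := by
  obtain ⟨i, hi, j, hj, hij, heq⟩ := exists_ne_map_eq_of_card_lt_of_maps_to
    (s := range (Fintype.card α + 1)) (t := univ) (f := (f^[·] x)) (by simp)
    (fun _ _ ↦ mem_univ _)
  rw [mem_range] at hi hj
  wlog hlt : i < j generalizing i j
  · exact this j hj i hi hij.symm heq.symm (by omega)
  have hper : f^[i] x ∈ periodicPts f := by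
    refine mk_mem_periodicPts (n := j - i) (by omega) ?_
    rw [IsPeriodicPt, IsFixedPt, ← iterate_add_apply, Nat.sub_add_cancel hlt.le]
    exact heq.symm
  obtain ⟨p, hp, hperp⟩ := mem_periodicPts.1 hper
  refine mk_mem_periodicPts hp ?_
  have := hperp.apply_iterate (Fintype.card α - i)
  rwa [← iterate_add_apply, Nat.sub_add_cancel (by omega)] at this

theorem Function.iterate_card_add_factorial {α : Type*} [Fintype α] (f : α → α) (x : α) :
    f^[Fintype.card α + (Fintype.card α)!] x = f^[Fintype.card α] x := by
  rw [add_comm, iterate_add_apply]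
  exact isPeriodicPt_factorial_card_of_mem_periodicPts (iterate_card_mem_periodicPts f x)

theorem List.foldl_replicate {α β : Type*} (f : α → β → α) (a : α) (b : β) (k : ℕ) :
    (replicate k b).foldl f a = (f · b)^[k] a := by
  induction k generalizing a with
  | zero => rfl
  | succ k ih => rw [replicate_succ, foldl_cons, ih, iterate_succ_apply]

section CollisionProb

variable {α β : Type*} [DecidableEq β]

def collisionProb (H : Finset (α → β)) (s s' : α) : ℚ :=
  #{h ∈ H | h s = h s'} / #H

theorem collisionProb_nonneg (H : Finset (α → β)) (s s' : α) : 0 ≤ collisionProb H s s' := by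
  unfold collisionProb; positivity

theorem collisionProb_eq_one {H : Finset (α → β)} (hH : H.Nonempty) {s s' : α}
    (h : ∀ h ∈ H, h s = h s') : collisionProb H s s' = 1 := by
  rw [collisionProb, filter_true_of_mem h, div_self (by exact_mod_cast hH.card_pos.ne')]

/-- By pigeonhole each `h` collides on a pair of distinct points of a `(card β + 1)`-subset `T'`
of `T`, so some pair of `T'.offDiag` is a collision for at least `1 / #T'.offDiag` of `H`. -/
theorem exists_ne_inv_le_collisionProb [Fintype β] {H : Finset (α → β)} (hH : H.Nonempty)
    {T : Finset α} (hT : Fintype.card β < #T) :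
    ∃ s s', s ≠ s' ∧ 1 / ((Fintype.card β + 1) * Fintype.card β : ℚ) ≤ collisionProb H s s' := by
  classical
  obtain ⟨T', -, hT'⟩ := exists_subset_card_eq hT
  have hcoll : ∀ h : α → β, ∃ p ∈ T'.offDiag, h p.1 = h p.2 := by
    intro h
    obtain ⟨s, hs, s', hs', hne, heq⟩ := exists_ne_map_eq_of_card_lt_of_maps_to
      (s := T') (t := univ) (f := h) (by simp [hT']) (fun _ _ ↦ mem_univ _)
    exact ⟨(s, s'), mem_offDiag.2 ⟨hs, hs', hne⟩, heq⟩
  choose pair hpair_mem hpair_eq using hcoll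
  have hS : #T'.offDiag = (Fintype.card β + 1) * Fintype.card β := by
    rw [offDiag_card, hT', Nat.mul_succ, Nat.add_sub_cancel]
  have hSne : T'.offDiag.Nonempty := ⟨_, hpair_mem hH.choose⟩
  have hSpos : (0 : ℚ) < #T'.offDiag := by exact_mod_cast hSne.card_pos
  have hHpos : (0 : ℚ) < #H := by exact_mod_cast hH.card_pos
  obtain ⟨p, hp, hfiber⟩ := exists_le_card_fiber_of_nsmul_le_card_of_maps_to
    (s := H) (f := pair) (fun h _ ↦ hpair_mem h) hSne
    (b := (#H : ℚ) / #T'.offDiag) (by rw [nsmul_eq_mul, mul_div_cancel₀ _ hSpos.ne'])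
  have hsub : {h ∈ H | pair h = p} ⊆ {h ∈ H | h p.1 = h p.2} :=
    monotone_filter_right H fun h _ hph ↦ hph ▸ hpair_eq h
  refine ⟨p.1, p.2, (mem_offDiag.1 hp).2.2, ?_⟩
  calc 1 / ((Fintype.card β + 1) * Fintype.card β : ℚ) = (#H / #T'.offDiag) / #H := by
        rw [div_div_cancel_left' hHpos.ne', hS]; push_cast; ring
    _ ≤ collisionProb H p.1 p.2 := by
        unfold collisionProb
        gcongr
        exact hfiber.trans (by exact_mod_cast card_le_card hsub)

end CollisionProb

theorem exists_card_eq_two_pow_of_le {n k : ℕ} (hk : k ≤ n) :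
    ∃ T : Finset {s : List Bool // s.length ≤ n}, #T = 2 ^ k :=
  ⟨univ.map ⟨fun v : Fin k → Bool ↦ ⟨List.ofFn v, by simpa⟩,
    fun _ _ h ↦ List.ofFn_injective (congrArg Subtype.val h)⟩, by simp⟩

theorem length_lt_card_add_factorial_of_iterated {V : Type*} [Fintype V] [DecidableEq V] {n : ℕ}
    {H : Finset ({s : List Bool // s.length ≤ n} → V)} (hne : H.Nonempty)
    (hiter : ∀ h ∈ H, ∃ (F : V → Bool → V) (H0 : V), ∀ s, h s = List.foldl F H0 s.1)
    {ε : ℚ} (hε : ε < 1) (huniv : ∀ s s', s ≠ s' → collisionProb H s s' ≤ ε) :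
    n < Fintype.card V + (Fintype.card V)! := by
  set m := Fintype.card V
  by_contra! hlong
  have hcoll : ∀ h ∈ H, h ⟨List.replicate m false, by simp; omega⟩ =
      h ⟨List.replicate (m + m !) false, by simpa⟩ := by
    intro h hh
    obtain ⟨F, H0, hF⟩ := hiter h hh
    rw [hF, hF, List.foldl_replicate, List.foldl_replicate, iterate_card_add_factorial]
  have hcertain := (collisionProb_eq_one hne hcoll).symm.trans_le
    (huniv _ _ (by simp [m.factorial_ne_zero]))
  linarith

/-- a nonempty finite family of iterated hash functions from binary strings
of length at most `n` to `Fin (2^L)` (`h` drawn uniformly) that is `ε`-almost universal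
for some `ε < 1` satisfies `n ≤ L·(ε·2^{L·(2^{L+1}+1)} + 1)`. -/
theorem iterated_almost_universal_length_bound (L n : ℕ) (hL : 1 ≤ L) (hn : 1 ≤ n)
    (H : Finset ({s : List Bool // s.length ≤ n} → Fin (2 ^ L))) (hne : H.Nonempty)
    (hiter : ∀ h ∈ H, ∃ (F : Fin (2 ^ L) → Bool → Fin (2 ^ L)) (H0 : Fin (2 ^ L)),
      ∀ s : {s : List Bool // s.length ≤ n}, h s = List.foldl F H0 s.1)
    (ε : ℚ) (hε : ε < 1)
    (huniv : ∀ s s' : {s : List Bool // s.length ≤ n}, s ≠ s' →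
      ((H.filter fun h => h s = h s').card : ℚ) / H.card ≤ ε) :
    (n : ℚ) ≤ L * (ε * 2 ^ (L * (2 ^ (L + 1) + 1)) + 1) := by
  rcases le_or_gt n L with hnL | hLn
  · have hε0 : 0 ≤ ε := (collisionProb_nonneg H _ _).trans
      (huniv ⟨[], by simp⟩ ⟨[false], by simpa using hn⟩ (by simp))
    calc (n : ℚ) ≤ L := by exact_mod_cast hnL
      _ ≤ _ := le_mul_of_one_le_right (by positivity) (le_add_of_nonneg_left (by positivity))
  obtain ⟨T, hT⟩ := exists_card_eq_two_pow_of_le hLn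
  obtain ⟨s, s', hss', hprob⟩ := exists_ne_inv_le_collisionProb hne (T := T)
    (by rw [hT, Fintype.card_fin]; exact Nat.pow_lt_pow_right one_lt_two (lt_add_one L))
  have hshort := length_lt_card_add_factorial_of_iterated hne hiter hε huniv
  rw [Fintype.card_fin] at hprob hshort
  have hnX : (n : ℚ) ≤ ε * ((2 ^ L) ^ (2 * 2 ^ L + 1) : ℕ) :=
    Nat.cast_le_mul_of_one_div_le (by positivity)
      (by exact_mod_cast hprob.trans (huniv s s' hss'))
      (Nat.mul_le_pow_of_lt_add_factorial (Nat.le_self_pow (by omega) 2) hshort)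
  have hX : (((2 ^ L) ^ (2 * 2 ^ L + 1) : ℕ) : ℚ) = 2 ^ (L * (2 ^ (L + 1) + 1)) := by
    push_cast; rw [pow_mul, pow_succ 2 L]; ring_nf
  have hLℚ : (1 : ℚ) ≤ L := by exact_mod_cast hL
  rw [hX] at hnX
  nlinarith [n.cast_nonneg (α := ℚ)]
end

section
/- Let L ≥ 1 and n ≥ 2, and let H be a nonempty finite set of iterated hash functions from binary strings (strings over a two-character alphabet) of length at most n to Fin (2^L), from which h is drawn uniformly at random. If H is strongly universal — i.e., P(h(s)=y ∧ h(s')=y') = 1/2^{2L} for all distinct binary strings s, s' of length at most n and all hash values y, y' — then n < L + 2·log₂((2^L)!) − log₂(2^L − 1). -/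
/-!
Strong universality gives every pair of distinct strings collision probability exactly `2^{-L}`.
For an iterated hash, `h ε = h 0` means that the initial value is a fixed point of `F · 0`, so
`h` is constant on `ε, 0, 00, …, 0ⁿ`; hence the collision set of `(ε, 0)` is contained in that of
every pair `(0^i, 0^j)`, and equal cardinalities make all these collision sets the same.
If `n ≥ 2^L`, the pigeonhole principle puts every `h` in one of them, so collisions would have
probability `1`. Hence `n < 2^L`, and the bound follows from `log₂ m! ≥ m - 1`.
-/

open Finset

section Collisions

variable {α β : Type*} [DecidableEq β]

def collisions (H : Finset (α → β)) (s t : α) : Finset (α → β) :=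
  H.filter fun h => h s = h t

theorem card_collisions_mul_card [Fintype β] [Nonempty β] {H : Finset (α → β)} {s t : α}
    (hdiag : ∀ y, #(H.filter fun h => h s = y ∧ h t = y) * Fintype.card β ^ 2 = #H) :
    #(collisions H s t) * Fintype.card β = #H := by
  have hfiber : #(collisions H s t) = ∑ y, #(H.filter fun h => h s = y ∧ h t = y) := by
    rw [collisions, card_eq_sum_card_fiberwise (f := fun h => h s) (t := univ)
      fun _ _ => mem_univ _]
    refine sum_congr rfl fun y _ => congrArg card ?_
    rw [filter_filter]
    exact filter_congr fun h _ => ⟨fun ⟨hst, hy⟩ => ⟨hy, hy ▸ hst.symm⟩,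
      fun ⟨hy, hty⟩ => ⟨hy.trans hty.symm, hy⟩⟩
  refine Nat.eq_of_mul_eq_mul_right (Fintype.card_pos (α := β)) ?_
  rw [hfiber, mul_assoc, ← sq, sum_mul, sum_congr rfl fun y _ => hdiag y, sum_const, card_univ,
    smul_eq_mul, mul_comm]

theorem collisions_eq_of_card_le [Fintype β] {H : Finset (α → β)} {x : ℕ → α} {n : ℕ}
    (hβ : Fintype.card β ≤ n)
    (hcard : ∀ i j, i < j → j ≤ n → #(collisions H (x i) (x j)) = #(collisions H (x 0) (x 1)))
    (hconst : ∀ h ∈ H, h (x 0) = h (x 1) → ∀ k ≤ n, h (x k) = h (x 0)) :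
    collisions H (x 0) (x 1) = H := by
  refine (filter_subset _ _).antisymm fun h hh => ?_
  have of_collision : ∀ i j, i < j → j ≤ n → h (x i) = h (x j) →
      h ∈ collisions H (x 0) (x 1) := by
    intro i j hij hj hcol
    have hsub : collisions H (x 0) (x 1) ⊆ collisions H (x i) (x j) := fun g hg => by
      obtain ⟨hgH, hg01⟩ := mem_filter.1 hg
      exact mem_filter.2 ⟨hgH, by rw [hconst g hgH hg01 i (by omega), hconst g hgH hg01 j hj]⟩
    rw [eq_of_subset_of_card_le hsub (hcard i j hij hj).le]
    exact mem_filter.2 ⟨hh, hcol⟩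
  obtain ⟨i, j, hij, hcol⟩ := Fintype.exists_ne_map_eq_of_card_lt
    (fun i : Fin (n + 1) => h (x i)) (by simpa using Nat.lt_succ_of_le hβ)
  rcases lt_or_gt_of_ne (Fin.val_ne_of_ne hij) with hlt | hlt
  · exact of_collision i j hlt (by omega) hcol
  · exact of_collision j i hlt (by omega) hcol.symm

end Collisions

theorem List.foldl_replicate_eq_self {α β : Type*} {F : α → β → α} {a : α} {b : β}
    (hfix : F a b = a) (k : ℕ) : (List.replicate k b).foldl F a = a := by
  induction k with
  | zero => rfl
  | succ k ih =>
    rw [List.replicate_succ', List.foldl_append, ih, List.foldl_cons, List.foldl_nil, hfix]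

theorem mul_eq_of_div_eq_one_div {K : Type*} [Field K] {a b c : K} (hc : c ≠ 0)
    (h : a / b = 1 / c) : a * c = b := by
  rcases eq_or_ne b 0 with rfl | hb
  · rw [div_zero, one_div, eq_comm, inv_eq_zero] at h
    exact absurd h hc
  · field_simp at h
    linear_combination h

def zeros (n k : ℕ) : {s : List Bool // s.length ≤ n} :=
  ⟨List.replicate (min k n) false, by simp⟩

theorem zeros_ne {n i j : ℕ} (hij : i < j) (hj : j ≤ n) : zeros n i ≠ zeros n j := fun h => by
  have := congrArg (fun s => s.1.length) h
  simp only [zeros, List.length_replicate] at this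
  omega

theorem apply_zeros_eq_of_iterated {n : ℕ} {V : Type*} {h : {s : List Bool // s.length ≤ n} → V}
    {F : V → Bool → V} {H0 : V} (hF : ∀ s, h s = List.foldl F H0 s.1) (hn : 1 ≤ n)
    (h01 : h (zeros n 0) = h (zeros n 1)) {k : ℕ} (hk : k ≤ n) :
    h (zeros n k) = h (zeros n 0) := by
  simp only [hF, zeros, Nat.min_eq_left hk, Nat.min_eq_left hn, Nat.zero_min,
    List.replicate_zero, List.replicate_one, List.foldl_cons, List.foldl_nil] at h01 ⊢
  exact List.foldl_replicate_eq_self h01.symm k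

theorem le_logb_two_factorial_succ (m : ℕ) : (m : ℝ) ≤ Real.logb 2 (m + 1).factorial := by
  have hpow : (2 : ℝ) ^ m ≤ (m + 1).factorial := by
    have := Nat.factorial_mul_pow_le_factorial (m := 1) (n := m)
    norm_num [Nat.add_comm 1 m] at this
    exact_mod_cast this
  rwa [Real.le_logb_iff_rpow_le one_lt_two (by positivity), Real.rpow_natCast]

theorem lt_length_bound_of_lt_two_pow {L n : ℕ} (hL : 1 ≤ L) (hn : n < 2 ^ L) :
    (n : ℝ) < L + 2 * Real.logb 2 (Nat.factorial (2 ^ L)) - Real.logb 2 (2 ^ L - 1) := by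
  have hm : 2 ≤ 2 ^ L := Nat.le_self_pow (by omega) 2
  have hfact : ((2 ^ L - 1 : ℕ) : ℝ) ≤ Real.logb 2 (Nat.factorial (2 ^ L)) := by
    simpa [Nat.sub_add_cancel (by omega : 1 ≤ 2 ^ L)] using le_logb_two_factorial_succ (2 ^ L - 1)
  have hlog : Real.logb 2 ((2 : ℝ) ^ L - 1) ≤ L := by
    have hm' : (2 : ℝ) ≤ 2 ^ L := by exact_mod_cast hm
    rw [Real.logb_le_iff_le_rpow one_lt_two (by linarith), Real.rpow_natCast]
    linarith
  have hnm : (n : ℝ) + 1 ≤ 2 * ((2 ^ L - 1 : ℕ) : ℝ) := by exact_mod_cast (by omega)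
  linarith

theorem iterated_strongly_universal_length_bound_general (L n : ℕ) (hL : 1 ≤ L)
    (H : Finset ({s : List Bool // s.length ≤ n} → Fin (2 ^ L))) (hne : H.Nonempty)
    (hiter : ∀ h ∈ H, ∃ (F : Fin (2 ^ L) → Bool → Fin (2 ^ L)) (H0 : Fin (2 ^ L)),
      ∀ s : {s : List Bool // s.length ≤ n}, h s = List.foldl F H0 s.1)
    (hsu : ∀ s s' : {s : List Bool // s.length ≤ n}, s ≠ s' →
      ∀ y y' : Fin (2 ^ L),
        ((H.filter fun h => h s = y ∧ h s' = y').card : ℚ) / H.card = 1 / 2 ^ (2 * L)) :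
    (n : ℝ) < L + 2 * Real.logb 2 (Nat.factorial (2 ^ L)) - Real.logb 2 (2 ^ L - 1) := by
  have hm : 2 ≤ 2 ^ L := Nat.le_self_pow (by omega) 2
  have hcoll : ∀ s t, s ≠ t → #(collisions H s t) * 2 ^ L = #H := fun s t hst => by
    simpa using card_collisions_mul_card (H := H) (s := s) (t := t) fun y => by
      rw [Fintype.card_fin, ← pow_mul, mul_comm L]
      exact_mod_cast mul_eq_of_div_eq_one_div (by positivity) (hsu s t hst y y)
  refine lt_length_bound_of_lt_two_pow hL (not_le.1 fun hge => ?_)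
  have hall : collisions H (zeros n 0) (zeros n 1) = H :=
    collisions_eq_of_card_le (x := zeros n) (by simpa using hge)
      (fun i j hij hj => Nat.eq_of_mul_eq_mul_right (by omega) <|
        (hcoll _ _ (zeros_ne hij hj)).trans (hcoll _ _ (zeros_ne one_pos (by omega))).symm)
      (fun h hh h01 k hk => by
        obtain ⟨F, H0, hF⟩ := hiter h hh
        exact apply_zeros_eq_of_iterated hF (by omega) h01 hk)
  have := hcoll _ _ (zeros_ne one_pos (by omega))
  rw [hall] at this
  nlinarith [card_pos.2 hne]

/-- a nonempty finite family of iterated hash functions from binary strings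
of length at most `n ≥ 2` to `Fin (2^L)` (`h` drawn uniformly) that is strongly universal
(every pair of distinct strings takes every pair of values with probability exactly
`1/2^{2L}`) satisfies `n < L + 2·log₂((2^L)!) − log₂(2^L − 1)`. -/
theorem iterated_strongly_universal_length_bound (L n : ℕ) (hL : 1 ≤ L) (hn : 2 ≤ n)
    (H : Finset ({s : List Bool // s.length ≤ n} → Fin (2 ^ L))) (hne : H.Nonempty)
    (hiter : ∀ h ∈ H, ∃ (F : Fin (2 ^ L) → Bool → Fin (2 ^ L)) (H0 : Fin (2 ^ L)),
      ∀ s : {s : List Bool // s.length ≤ n}, h s = List.foldl F H0 s.1)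
    (hsu : ∀ s s' : {s : List Bool // s.length ≤ n}, s ≠ s' →
      ∀ y y' : Fin (2 ^ L),
        ((H.filter fun h => h s = y ∧ h s' = y').card : ℚ) / H.card = 1 / 2 ^ (2 * L)) :
    (n : ℝ) < L + 2 * Real.logb 2 (Nat.factorial (2 ^ L)) - Real.logb 2 (2 ^ L - 1) :=
  iterated_strongly_universal_length_bound_general L n hL H hne hiter hsu
end

section
/- Let L ≥ 1, let a be a character, and let M be the least common multiple of the integers 1, 2, …, 2^L. Then there exists a nonempty finite family H of iterated hash functions from strings over the one-character alphabet {a} to Fin (2^L) such that for every pair of distinct lengths r, r' with 1 ≤ r, r' ≤ 2^L + M − 2, some h ∈ H satisfies h(a^r) ≠ h(a^{r'}). Consequently, choosing h uniformly at random from H gives an ε-almost universal family, for some ε < 1, over the unary strings of length at most 2^L + M − 2. -/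
/-!
A hash that only counts the length of a unary string is iterated: its compression function
ignores the character and advances a counter. Two kinds of counters into `Fin c` suffice:
the saturating counter `min n (c - 1)`, which separates two lengths one of which is below
`c - 1`, and the counters `n % m` for `1 ≤ m ≤ c`. Two lengths that are both at least `c - 1`
and at most `c + M - 2` differ by less than `M = lcm(1, …, c)`, so some `m ≤ c` does not divide
their difference. A finite family separating every pair has collision probability at most
`1 - 1/|H| < 1`.
-/

open Finset

theorem List.foldl_const_eq_of_succ {A V : Type*} (f : ℕ → V) (g : V → V)
    (hf : ∀ n, f (n + 1) = g (f n)) (s : List A) :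
    List.foldl (fun x _ => g x) (f 0) s = f s.length := by
  suffices ∀ k, List.foldl (fun x _ => g x) (f k) s = f (k + s.length) by simpa using this 0
  induction s with
  | nil => simp
  | cons _ t ih => intro k; rw [List.foldl_cons, ← hf, ih, List.length_cons]; ring_nf

theorem Finset.exists_not_dvd_of_lt_lcm {s : Finset ℕ} {d : ℕ} (hd : 0 < d)
    (hlt : d < s.lcm id) :
    ∃ m ∈ s, ¬ m ∣ d := by
  by_contra! h
  exact (Nat.le_of_dvd hd (Finset.lcm_dvd h)).not_gt hlt

theorem Finset.card_filter_div_card_le {α 𝕜 : Type*} [Field 𝕜] [LinearOrder 𝕜]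
    [IsStrictOrderedRing 𝕜] {s : Finset α} {p : α → Prop} [DecidablePred p]
    (h : ∃ x ∈ s, ¬ p x) : (#(s.filter p) : 𝕜) / #s ≤ (#s - 1) / #s := by
  have hlt : #(s.filter p) < #s := card_lt_card (filter_ssubset.mpr h)
  gcongr
  rw [le_sub_iff_add_le]
  exact_mod_cast hlt

section Counters

variable (c : ℕ)

def satCount [NeZero c] (n : ℕ) : Fin c :=
  ⟨min n (c - 1), by have := NeZero.pos c; omega⟩

/-- The index `m : Fin c` encodes the modulus `m + 1 ∈ [1, c]`. -/
def modCount (m : Fin c) (n : ℕ) : Fin c :=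
  ⟨n % (m + 1), (Nat.mod_lt _ m.val.succ_pos).trans_le m.isLt⟩

theorem satCount_succ [NeZero c] (n : ℕ) :
    satCount c (n + 1) = satCount c (satCount c n + 1) := by
  ext; simp only [satCount]; omega

theorem modCount_succ (m : Fin c) (n : ℕ) :
    modCount c m (n + 1) = modCount c m (modCount c m n + 1) := by
  ext; exact (Nat.mod_add_mod _ _ _).symm

theorem satCount_ne_or_exists_modCount_ne [NeZero c] {r r' : ℕ} (hne : r ≠ r')
    (hr : r ≤ c + (Icc 1 c).lcm id - 2) (hr' : r' ≤ c + (Icc 1 c).lcm id - 2) :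
    satCount c r ≠ satCount c r' ∨ ∃ m : Fin c, modCount c m r ≠ modCount c m r' := by
  wlog hlt : r < r' generalizing r r'
  · simpa only [ne_comm] using this hne.symm hr' hr (by omega)
  by_cases hsmall : r < c - 1
  · left
    simp only [satCount, ne_eq, Fin.mk.injEq]
    omega
  right
  have hM : 0 < (Icc 1 c).lcm id :=
    Nat.pos_of_ne_zero fun h0 => by simpa using Finset.lcm_eq_zero_iff.mp h0
  obtain ⟨m, hm, hndvd⟩ :=
    exists_not_dvd_of_lt_lcm (s := Icc 1 c) (d := r' - r) (by omega) (by omega)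
  obtain ⟨hm1, hmc⟩ := mem_Icc.mp hm
  refine ⟨⟨m - 1, by omega⟩, fun heq => hndvd ?_⟩
  have hmod : r % m = r' % m := by
    simpa [modCount, Nat.sub_add_cancel hm1] using congrArg Fin.val heq
  exact (Nat.modEq_iff_dvd' hlt.le).mp hmod

end Counters

theorem exists_foldl_eq_comp_length {A V : Type*} (f : ℕ → V) (g : V → V)
    (hf : ∀ n, f (n + 1) = g (f n)) :
    ∃ (F : V → A → V) (H0 : V), ∀ s : List A, f s.length = List.foldl F H0 s :=
  ⟨fun x _ => g x, f 0, fun s => (List.foldl_const_eq_of_succ f g hf s).symm⟩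

theorem iterated_unary_almost_universal_family_exists_general
    {A : Type*} (a : A) (L : ℕ) :
    ∃ H : Finset (List A → Fin (2 ^ L)), H.Nonempty ∧
      (∀ h ∈ H, ∃ (F : Fin (2 ^ L) → A → Fin (2 ^ L)) (H0 : Fin (2 ^ L)),
        ∀ s : List A, h s = List.foldl F H0 s) ∧
      (∀ r r' : ℕ, r ≠ r' → 1 ≤ r → 1 ≤ r' →
        r ≤ 2 ^ L + (Finset.Icc 1 (2 ^ L)).lcm id - 2 →
        r' ≤ 2 ^ L + (Finset.Icc 1 (2 ^ L)).lcm id - 2 →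
        ∃ h ∈ H, h (List.replicate r a) ≠ h (List.replicate r' a)) ∧
      ∃ ε : ℚ, ε < 1 ∧
        ∀ r r' : ℕ, r ≠ r' → 1 ≤ r → 1 ≤ r' →
          r ≤ 2 ^ L + (Finset.Icc 1 (2 ^ L)).lcm id - 2 →
          r' ≤ 2 ^ L + (Finset.Icc 1 (2 ^ L)).lcm id - 2 →
          ((H.filter fun h =>
              h (List.replicate r a) = h (List.replicate r' a)).card : ℚ) / H.card
            ≤ ε := by
  classical
  let H : Finset (List A → Fin (2 ^ L)) := insert (fun s => satCount _ s.length)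
    (univ.image fun m s => modCount _ m s.length)
  have hsep : ∀ r r', r ≠ r' → r ≤ 2 ^ L + (Icc 1 (2 ^ L)).lcm id - 2 →
      r' ≤ 2 ^ L + (Icc 1 (2 ^ L)).lcm id - 2 →
      ∃ h ∈ H, h (List.replicate r a) ≠ h (List.replicate r' a) := by
    intro r r' hne hr hr'
    rcases satCount_ne_or_exists_modCount_ne _ hne hr hr' with h | ⟨m, h⟩
    · exact ⟨_, mem_insert_self _ _, by simpa using h⟩
    · exact ⟨_, mem_insert_of_mem (mem_image_of_mem _ (mem_univ m)), by simpa using h⟩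
  refine ⟨H, insert_nonempty _ _, ?_, fun r r' hne _ _ => hsep r r' hne, (#H - 1) / #H, ?_,
    fun r r' hne _ _ hr hr' => card_filter_div_card_le (hsep r r' hne hr hr')⟩
  · simp only [H, mem_insert, mem_image, mem_univ, true_and]
    rintro h (rfl | ⟨m, rfl⟩)
    · exact exists_foldl_eq_comp_length _ (fun x => satCount _ (x + 1)) (satCount_succ _)
    · exact exists_foldl_eq_comp_length _ (fun x => modCount _ m (x + 1)) (modCount_succ _ m)
  · have : (0 : ℚ) < #H := by exact_mod_cast (insert_nonempty _ _).card_pos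
    rw [div_lt_one this]
    linarith

/-- over the one-character alphabet `{a}` there exists a nonempty finite
family `H` of iterated hash functions into `Fin (2^L)` that separates every pair of
distinct unary strings of length between `1` and `2^L + M − 2` (`M = lcm(1, …, 2^L)`):
for each such pair some `h ∈ H` distinguishes them. Consequently, drawing `h` uniformly
from `H` yields an `ε`-almost universal family, for some `ε < 1`, over these unary
strings. -/
theorem iterated_unary_almost_universal_family_exists
    {A : Type*} (a : A) (L : ℕ) (hL : 1 ≤ L) :
    ∃ H : Finset (List A → Fin (2 ^ L)), H.Nonempty ∧
      (∀ h ∈ H, ∃ (F : Fin (2 ^ L) → A → Fin (2 ^ L)) (H0 : Fin (2 ^ L)),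
        ∀ s : List A, h s = List.foldl F H0 s) ∧
      (∀ r r' : ℕ, r ≠ r' → 1 ≤ r → 1 ≤ r' →
        r ≤ 2 ^ L + (Finset.Icc 1 (2 ^ L)).lcm id - 2 →
        r' ≤ 2 ^ L + (Finset.Icc 1 (2 ^ L)).lcm id - 2 →
        ∃ h ∈ H, h (List.replicate r a) ≠ h (List.replicate r' a)) ∧
      ∃ ε : ℚ, ε < 1 ∧
        ∀ r r' : ℕ, r ≠ r' → 1 ≤ r → 1 ≤ r' →
          r ≤ 2 ^ L + (Finset.Icc 1 (2 ^ L)).lcm id - 2 →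
          r' ≤ 2 ^ L + (Finset.Icc 1 (2 ^ L)).lcm id - 2 →
          ((H.filter fun h =>
              h (List.replicate r a) = h (List.replicate r' a)).card : ℚ) / H.card
            ≤ ε :=
  iterated_unary_almost_universal_family_exists_general a L
end
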